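/- arXiv:math/0008018 — 5 statements merged into one kernel-verified Lean document; each statement's English description precedes it below -/
import Mathlib

section
/- For the harmonic function V₀(u,y) = lim_j (1/4π) Σ_{n=-j}^{j} (1/√((u+nε)² + |y|²) − a_{|n|}) (with a_n = 1/(nε) for n ≠ 0, a_0 = 2(−γ + log 2ε)/ε), the mean value over one period in u equals the logarithmic term: (1/ε)∫₀^ε V₀(u,y) du = −(1/4πε) log|y|² for all y ≠ 0. -/
open Real Filter Topology Finset

/-! With `r = |y|`, the `n`-th term integrates over `[0, ε]` to
`arsinh ((n + 1) ε / r) - arsinh (n ε / r) - ε a_|n|`, so the arsinh parts telescope over `n ∈ [-j, j]` and the integral of the `j`-th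
partial sum is `arsinh ((j + 1) ε / r) + arsinh (j ε / r) - ε a₀ - 2 H_j`. As
`arsinh x = log (2x) + o(1)` and `H_j = log j + γ + o(1)`, this tends to
`2 log (2ε / r) - 2γ - ε a₀ = -log r²`: the constant `a₀` is chosen to cancel everything but the
logarithm. The limit commutes with the integral by dominated convergence, because for `n ≠ 0` the
`n`-th term differs from `1 / (|n| ε)` by `O(1 / n²)` uniformly in `u ∈ [0, ε]`. -/

theorem sum_Icc_neg_eq_add_sum_range {M : Type*} [AddCommMonoid M] (f : ℤ → M) (j : ℕ) :
    ∑ n ∈ Icc (-(j : ℤ)) j, f n = f 0 + ∑ i ∈ range j, (f (i + 1) + f (-(i + 1))) := by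
  induction j with
  | zero => simp
  | succ j ih =>
    have hIcc : Icc (-((j + 1 : ℕ) : ℤ)) ((j + 1 : ℕ) : ℤ)
        = insert (-((j : ℤ) + 1)) (insert ((j : ℤ) + 1) (Icc (-(j : ℤ)) j)) := by
      ext n; simp only [mem_Icc, mem_insert]; omega
    rw [hIcc, sum_insert (by simp only [mem_insert, mem_Icc]; omega),
      sum_insert (by simp only [mem_Icc]; omega), ih, sum_range_succ]
    abel

theorem sum_Icc_neg_sub (G : ℤ → ℝ) (j : ℕ) :
    ∑ n ∈ Icc (-(j : ℤ)) j, (G (n + 1) - G n) = G (j + 1) - G (-j) := by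
  have hpos : ∑ i ∈ range j, (G ((i : ℤ) + 1 + 1) - G ((i : ℤ) + 1)) = G (j + 1) - G 1 := by
    simpa using sum_range_sub (fun i : ℕ => G ((i : ℤ) + 1)) j
  have hneg : ∑ i ∈ range j, (G (-((i : ℤ) + 1) + 1) - G (-((i : ℤ) + 1))) = G 0 - G (-j) := by
    simpa using sum_range_sub' (fun i : ℕ => G (-(i : ℤ))) j
  rw [sum_Icc_neg_eq_add_sum_range, sum_add_distrib, hpos, hneg, zero_add]
  abel

theorem continuous_one_div_sqrt_sq_add_sq {r : ℝ} (hr : 0 < r) (c : ℝ) :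
    Continuous fun u : ℝ => 1 / √((u + c) ^ 2 + r ^ 2) :=
  continuous_const.div (by fun_prop) fun u => by positivity

theorem integral_one_div_sqrt_sq_add_sq {r : ℝ} (hr : 0 < r) (a b : ℝ) :
    ∫ x in a..b, 1 / √(x ^ 2 + r ^ 2) = arsinh (b / r) - arsinh (a / r) := by
  have hderiv (x : ℝ) : HasDerivAt (fun x => arsinh (x / r)) (1 / √(x ^ 2 + r ^ 2)) x := by
    refine ((hasDerivAt_arsinh _).comp x ((hasDerivAt_id x).div_const r)).congr_deriv ?_
    have hsqrt : √(1 + (x / r) ^ 2) = √(x ^ 2 + r ^ 2) / r := by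
      rw [show 1 + (x / r) ^ 2 = (x ^ 2 + r ^ 2) / r ^ 2 by field_simp; ring,
        sqrt_div' _ (by positivity), sqrt_sq hr.le]
    have : √(x ^ 2 + r ^ 2) ≠ 0 := by positivity
    rw [id, hsqrt]
    field_simp
  have hcont : Continuous fun x : ℝ => 1 / √(x ^ 2 + r ^ 2) :=
    continuous_const.div (by fun_prop) fun x => by positivity
  exact intervalIntegral.integral_eq_sub_of_hasDerivAt (fun x _ => hderiv x)
    (hcont.intervalIntegrable a b)

theorem tendsto_arsinh_sub_log : Tendsto (fun x => arsinh x - log x) atTop (𝓝 (log 2)) := by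
  have hcont : ContinuousAt (fun t : ℝ => log (1 + √(t ^ 2 + 1))) 0 :=
    ContinuousAt.log (by fun_prop) (by positivity)
  have hlim : Tendsto (fun x : ℝ => log (1 + √(x⁻¹ ^ 2 + 1))) atTop (𝓝 (log 2)) := by
    convert hcont.tendsto.comp tendsto_inv_atTop_zero using 2
    all_goals norm_num
  refine hlim.congr' ?_
  filter_upwards [eventually_gt_atTop 0] with x hx
  have hsqrt : √(1 + x ^ 2) = x * √(x⁻¹ ^ 2 + 1) := by
    rw [← sqrt_sq hx.le, ← sqrt_mul (sq_nonneg x), sqrt_sq hx.le]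
    congr 1
    field_simp
  rw [arsinh, hsqrt, show x + x * √(x⁻¹ ^ 2 + 1) = x * (1 + √(x⁻¹ ^ 2 + 1)) by ring,
    log_mul hx.ne' (by positivity)]
  ring

theorem abs_one_div_sqrt_sq_add_sq_sub_le {c r : ℝ} (hc : 0 < c) (hr : 0 < r) (t : ℝ) :
    |1 / √(t ^ 2 + r ^ 2) - 1 / c| ≤ 2 * (|t - c| + r) / (c * (|t| + r)) := by
  set s := √(t ^ 2 + r ^ 2)
  have hts : |t| ≤ s := abs_le_sqrt (by linarith [sq_nonneg r])
  have hrs : r ≤ s := le_sqrt_of_sq_le (by linarith [sq_nonneg t])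
  have hs_le : s ≤ |t| + r := by
    rw [sqrt_le_left (by positivity)]; nlinarith [sq_abs t, abs_nonneg t]
  have hs : 0 < s := hr.trans_le hrs
  have hcs : |c - s| ≤ |t - c| + r := by
    rw [abs_le]
    constructor <;> cases abs_cases t <;> cases abs_cases (t - c) <;> linarith
  calc |1 / s - 1 / c| = |c - s| / (c * s) := by
        rw [div_sub_div _ _ hs.ne' hc.ne', abs_div, abs_of_pos (mul_pos hs hc)]; ring_nf
    _ ≤ (|t - c| + r) / (c * ((|t| + r) / 2)) := by gcongr; linarith
    _ = 2 * (|t - c| + r) / (c * (|t| + r)) := by field_simp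

theorem abs_one_div_sqrt_sub_le_div_sq {ε r u : ℝ} (hε : 0 < ε) (hr : 0 < r)
    (hu : u ∈ Set.Icc 0 ε) {n : ℤ} (hn : n ≠ 0) :
    |1 / √((u + n * ε) ^ 2 + r ^ 2) - 1 / (|(n : ℝ)| * ε)|
      ≤ 2 * (ε + r) / (ε * min ε r) / (n : ℝ) ^ 2 := by
  have hn1 : 1 ≤ |(n : ℝ)| := by rw [← Int.cast_abs]; exact_mod_cast Int.one_le_abs hn
  have hm : 0 < min ε r := lt_min hε hr
  have hdist : |(|u + n * ε| - |(n : ℝ)| * ε)| ≤ ε := by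
    calc |(|u + n * ε| - |(n : ℝ)| * ε)| = |(|u + n * ε| - |n * ε|)| := by
          rw [abs_mul, abs_of_pos hε]
      _ ≤ |u + n * ε - n * ε| := abs_abs_sub_abs_le_abs_sub _ _
      _ ≤ ε := by rw [add_sub_cancel_right, abs_of_nonneg hu.1]; exact hu.2
  have hlow : |(n : ℝ)| * min ε r ≤ |(|u + n * ε|)| + r := by
    have : |(n : ℝ)| * ε - ε ≤ |u + n * ε| := by
      have := abs_sub_abs_le_abs_sub (n * ε) (-u)
      rw [abs_mul, abs_of_pos hε, abs_neg, abs_of_nonneg hu.1, sub_neg_eq_add, add_comm] at this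
      linarith [hu.2]
    rw [abs_abs]
    nlinarith [min_le_left ε r, min_le_right ε r]
  calc |1 / √((u + n * ε) ^ 2 + r ^ 2) - 1 / (|(n : ℝ)| * ε)|
      = |1 / √(|u + n * ε| ^ 2 + r ^ 2) - 1 / (|(n : ℝ)| * ε)| := by rw [sq_abs]
    _ ≤ 2 * (|(|u + n * ε| - |(n : ℝ)| * ε)| + r) / (|(n : ℝ)| * ε * (|(|u + n * ε|)| + r)) :=
        abs_one_div_sqrt_sq_add_sq_sub_le (by positivity) hr _
    _ ≤ 2 * (ε + r) / (|(n : ℝ)| * ε * (|(n : ℝ)| * min ε r)) := by gcongr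
    _ = 2 * (ε + r) / (ε * min ε r) / (n : ℝ) ^ 2 := by
        rw [← sq_abs (n : ℝ)]; field_simp

noncomputable def ooguriVafaPartialSum (ε r : ℝ) (a : ℤ → ℝ) (j : ℕ) (u : ℝ) : ℝ :=
  ∑ n ∈ Icc (-(j : ℤ)) j, (1 / √((u + n * ε) ^ 2 + r ^ 2) - a |n|)

theorem continuous_ooguriVafaPartialSum (ε : ℝ) {r : ℝ} (hr : 0 < r) (a : ℤ → ℝ) (j : ℕ) :
    Continuous (ooguriVafaPartialSum ε r a j) :=
  continuous_finsetSum _ fun _ _ => (continuous_one_div_sqrt_sq_add_sq hr _).sub continuous_const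

theorem abs_ooguriVafaPartialSum_le {ε r : ℝ} (hε : 0 < ε) (hr : 0 < r) {a : ℤ → ℝ}
    (ha : ∀ n : ℤ, n ≠ 0 → a n = 1 / ((|n| : ℝ) * ε)) (j : ℕ) {u : ℝ} (hu : u ∈ Set.Icc 0 ε) :
    |ooguriVafaPartialSum ε r a j u|
      ≤ 1 / r + |a 0| + 2 * (ε + r) / (ε * min ε r) * ∑' n : ℤ, 1 / (n : ℝ) ^ 2 := by
  set K := 2 * (ε + r) / (ε * min ε r)
  have hzero : abs (1 / √((u + ((0 : ℤ) : ℝ) * ε) ^ 2 + r ^ 2) - a (abs 0)) ≤ 1 / r + |a 0| := by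
    refine (abs_sub _ _).trans (add_le_add ?_ (by rw [abs_zero]))
    rw [abs_of_nonneg (by positivity)]
    exact one_div_le_one_div_of_le hr (le_sqrt_of_sq_le (by nlinarith [sq_nonneg u]))
  have hterm (n : ℤ) (hn : n ∈ (Icc (-(j : ℤ)) j).erase 0) :
      abs (1 / √((u + n * ε) ^ 2 + r ^ 2) - a |n|) ≤ K * (1 / (n : ℝ) ^ 2) := by
    have hn0 := ne_of_mem_erase hn
    rw [ha |n| (abs_ne_zero.mpr hn0), Int.cast_abs, abs_abs, mul_one_div]
    exact abs_one_div_sqrt_sub_le_div_sq hε hr hu hn0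
  have hsum : ∑ n ∈ (Icc (-(j : ℤ)) j).erase 0, 1 / (n : ℝ) ^ 2 ≤ ∑' n : ℤ, 1 / (n : ℝ) ^ 2 :=
    (summable_one_div_int_pow.mpr one_lt_two).sum_le_tsum _ fun n _ => by positivity
  have hK : 0 ≤ K := by positivity
  unfold ooguriVafaPartialSum
  rw [← add_sum_erase _ _ (by simp : (0 : ℤ) ∈ Icc (-(j : ℤ)) j)]
  calc _ ≤ _ := abs_add_le _ _
    _ ≤ 1 / r + |a 0| + ∑ n ∈ (Icc (-(j : ℤ)) j).erase 0, K * (1 / (n : ℝ) ^ 2) :=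
        add_le_add hzero ((abs_sum_le_sum_abs _ _).trans (sum_le_sum hterm))
    _ ≤ 1 / r + |a 0| + K * ∑' n : ℤ, 1 / (n : ℝ) ^ 2 := by
        rw [← mul_sum]; gcongr

theorem sum_Icc_neg_mul_apply_abs {ε : ℝ} (hε : 0 < ε) {a : ℤ → ℝ}
    (ha : ∀ n : ℤ, n ≠ 0 → a n = 1 / ((|n| : ℝ) * ε)) (j : ℕ) :
    ∑ n ∈ Icc (-(j : ℤ)) j, ε * a |n| = ε * a 0 + 2 * (harmonic j : ℝ) := by
  have hpair (i : ℕ) : ε * a |(i : ℤ) + 1| + ε * a |-((i : ℤ) + 1)| = 2 * ((i : ℝ) + 1)⁻¹ := by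
    rw [abs_neg, abs_of_nonneg (by positivity : (0 : ℤ) ≤ i + 1), ha _ (by positivity)]
    push_cast
    rw [abs_of_nonneg (by positivity : (0 : ℝ) ≤ i + 1)]
    field_simp
    ring
  rw [sum_Icc_neg_eq_add_sum_range, abs_zero, sum_congr rfl fun i _ => hpair i, ← mul_sum,
    harmonic]
  push_cast
  rfl

theorem integral_ooguriVafaPartialSum {ε r : ℝ} (hε : 0 < ε) (hr : 0 < r) {a : ℤ → ℝ}
    (ha : ∀ n : ℤ, n ≠ 0 → a n = 1 / ((|n| : ℝ) * ε)) (j : ℕ) :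
    ∫ u in (0 : ℝ)..ε, ooguriVafaPartialSum ε r a j u
      = arsinh ((j + 1) * ε / r) + arsinh (j * ε / r) - ε * a 0 - 2 * (harmonic j : ℝ) := by
  have hterm (n : ℤ) : ∫ u in (0 : ℝ)..ε, (1 / √((u + n * ε) ^ 2 + r ^ 2) - a |n|)
      = arsinh (((n + 1 : ℤ) : ℝ) * ε / r) - arsinh ((n : ℝ) * ε / r) - ε * a |n| := by
    rw [intervalIntegral.integral_sub
        ((continuous_one_div_sqrt_sq_add_sq hr _).intervalIntegrable _ _) intervalIntegrable_const,
      intervalIntegral.integral_comp_add_right (fun u => 1 / √(u ^ 2 + r ^ 2)),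
      integral_one_div_sqrt_sq_add_sq hr, intervalIntegral.integral_const, smul_eq_mul]
    push_cast
    ring_nf
  have hint (n : ℤ) : IntervalIntegrable (fun u => 1 / √((u + n * ε) ^ 2 + r ^ 2) - a |n|)
      MeasureTheory.volume 0 ε :=
    ((continuous_one_div_sqrt_sq_add_sq hr _).sub continuous_const).intervalIntegrable _ _
  unfold ooguriVafaPartialSum
  rw [intervalIntegral.integral_finsetSum fun n _ => hint n, sum_congr rfl fun n _ => hterm n,
    sum_sub_distrib, sum_Icc_neg_mul_apply_abs hε ha,
    sum_Icc_neg_sub fun n : ℤ => arsinh ((n : ℝ) * ε / r)]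
  push_cast
  rw [neg_mul, neg_div, arsinh_neg]
  ring

theorem tendsto_arsinh_add_arsinh_sub_two_mul_harmonic {c : ℝ} (hc : 0 < c) :
    Tendsto (fun j : ℕ => arsinh ((j + 1) * c) + arsinh (j * c) - 2 * (harmonic j : ℝ)) atTop
      (𝓝 (2 * log (2 * c) - 2 * eulerMascheroniConstant)) := by
  have hsucc : Tendsto (fun j : ℕ => ((j : ℝ) + 1) * c) atTop atTop :=
    (tendsto_atTop_add_const_right _ 1 tendsto_natCast_atTop_atTop).atTop_mul_const hc
  have hnat : Tendsto (fun j : ℕ => (j : ℝ) * c) atTop atTop :=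
    tendsto_natCast_atTop_atTop.atTop_mul_const hc
  have hlim := ((((tendsto_arsinh_sub_log.comp hsucc).add (tendsto_arsinh_sub_log.comp hnat)).sub
    tendsto_harmonic_sub_log_add_one).sub tendsto_harmonic_sub_log).add_const (2 * log c)
  rw [show 2 * log (2 * c) - 2 * eulerMascheroniConstant = log 2 + log 2
      - eulerMascheroniConstant - eulerMascheroniConstant + 2 * log c by
    rw [log_mul two_ne_zero hc.ne']; ring]
  refine hlim.congr' ?_
  filter_upwards [eventually_ne_atTop 0] with j hj
  have hj : (0 : ℝ) < j := by positivity
  simp only [Function.comp_apply]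
  rw [log_mul (by positivity) hc.ne', log_mul hj.ne' hc.ne']
  ring

theorem tendsto_integral_ooguriVafaPartialSum {ε r : ℝ} (hε : 0 < ε) (hr : 0 < r) {a : ℤ → ℝ}
    (ha0 : a 0 = 2 * (-eulerMascheroniConstant + log (2 * ε)) / ε)
    (ha : ∀ n : ℤ, n ≠ 0 → a n = 1 / ((|n| : ℝ) * ε)) :
    Tendsto (fun j => ∫ u in (0 : ℝ)..ε, ooguriVafaPartialSum ε r a j u) atTop
      (𝓝 (-log (r ^ 2))) := by
  have hlim := (tendsto_arsinh_add_arsinh_sub_two_mul_harmonic (div_pos hε hr)).sub_const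
    (ε * a 0)
  have hval : 2 * log (2 * (ε / r)) - 2 * eulerMascheroniConstant - ε * a 0 = -log (r ^ 2) := by
    rw [ha0, mul_div_cancel₀ _ hε.ne', ← mul_div_assoc, log_div (by positivity) hr.ne', log_pow]
    push_cast
    ring
  rw [hval] at hlim
  refine hlim.congr fun j => ?_
  rw [integral_ooguriVafaPartialSum hε hr ha, mul_div_assoc, mul_div_assoc]
  ring

/-- The mean value of the Ooguri–Vafa harmonic function `V₀` over one period
in `u` is `-(1/4πε) log |y|²`, for every `y ≠ 0` in the unit disc.  `V₀ u y` is characterised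
as the pointwise limit of the partial sums of the defining series. -/
theorem statement1 (ε : ℝ) (hε : 0 < ε)
    (a : ℤ → ℝ)
    (ha0 : a 0 = 2 * (-Real.eulerMascheroniConstant + Real.log (2 * ε)) / ε)
    (ha : ∀ n : ℤ, n ≠ 0 → a n = 1 / ((|n| : ℝ) * ε))
    (V₀ : ℝ → ℂ → ℝ)
    (hV : ∀ (u : ℝ) (y : ℂ), y ≠ 0 → ‖y‖ < 1 →
      Tendsto (fun j : ℕ => (1 / (4 * π)) * ∑ n ∈ Finset.Icc (-(j : ℤ)) (j : ℤ),
          (1 / Real.sqrt ((u + (n : ℝ) * ε) ^ 2 + ‖y‖ ^ 2) - a |n|))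
        atTop (nhds (V₀ u y)))
    (y : ℂ) (hy : y ≠ 0) (hy1 : ‖y‖ < 1) :
    (1 / ε) * ∫ u in (0:ℝ)..ε, V₀ u y = -(1 / (4 * π * ε)) * Real.log (‖y‖ ^ 2) := by
  have hr : 0 < ‖y‖ := norm_pos_iff.mpr hy
  have hdominated : Tendsto (fun j => ∫ u in (0 : ℝ)..ε,
      (1 / (4 * π)) * ooguriVafaPartialSum ε ‖y‖ a j u) atTop
      (𝓝 (∫ u in (0 : ℝ)..ε, V₀ u y)) := by
    refine intervalIntegral.tendsto_integral_filter_of_dominated_convergence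
      (fun _ => 1 / (4 * π) * (1 / ‖y‖ + |a 0|
        + 2 * (ε + ‖y‖) / (ε * min ε ‖y‖) * ∑' n : ℤ, 1 / (n : ℝ) ^ 2))
      (.of_forall fun j =>
        (continuous_const.mul (continuous_ooguriVafaPartialSum ε hr a j)).aestronglyMeasurable)
      (.of_forall fun j => .of_forall fun u hu => ?_) intervalIntegrable_const
      (.of_forall fun u _ => hV u y hy hy1)
    rw [Set.uIoc_of_le hε.le] at hu
    rw [norm_mul, norm_of_nonneg (by positivity), norm_eq_abs]
    gcongr
    exact abs_ooguriVafaPartialSum_le hε hr ha j (Set.Ioc_subset_Icc_self hu)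
  have hpartial : Tendsto (fun j => ∫ u in (0 : ℝ)..ε,
      (1 / (4 * π)) * ooguriVafaPartialSum ε ‖y‖ a j u) atTop
      (𝓝 (1 / (4 * π) * -log (‖y‖ ^ 2))) := by
    simp_rw [intervalIntegral.integral_const_mul]
    exact (tendsto_integral_ooguriVafaPartialSum hε hr ha0 ha).const_mul _
  rw [tendsto_nhds_unique hdominated hpartial]
  field_simp
end

section
/- Let 0 < r ≤ 1 and let f be a harmonic function on the disc D_r of radius r such that f(y) − (1/4π) log|y|² > 0 for all 0 < |y| ≤ r. Then there exists ε₀ > 0 such that for all 0 < ε < ε₀ the function V₀ + f(y)/ε is strictly positive on (D_r × ℝ) \ ({0} × εℤ). -/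
open Real Filter Metric

/-- Directional derivative of a real-valued function on `ℂ`. -/
noncomputable def cpd (v : ℂ) (f : ℂ → ℝ) (y : ℂ) : ℝ := fderiv ℝ f y v

/-!
On the lattice `u + εℤ` the summand `1 / √(s² + ρ²)` (with `ρ = |y|`) is compared with its
integral, whose primitive is `log (s + √(s² + ρ²))`. Splitting the lattice at the last point
`u + mε ≤ 0`, each half of the truncated sum dominates `1/ε` times an integral; the
logarithmic divergence of these integrals is exactly cancelled by the renormalisation
constants `a ε n` (harmonic numbers and Euler's constant), leaving
`V₀ ε u y ≥ -log (ε + |y|) / (2πε)`. The hypothesis on `f` says `log |y| < 2π f(y)` on the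
punctured disc, and by compactness `log (ε + |y|) < 2π f(y)` on the whole disc once `ε` is
small: near the centre because `f` is bounded below, away from it because `log` is Lipschitz.
-/

open Finset Topology

theorem Finset.sum_Icc_int_eq_sum_range_add_sum_range {M : Type*} [AddCommMonoid M]
    (g : ℤ → M) {a b : ℤ} (m : ℤ) (ha : a ≤ m + 1) (hb : m ≤ b) :
    ∑ n ∈ Icc a b, g n =
      ∑ k ∈ range (m + 1 - a).toNat, g (m - k) + ∑ k ∈ range (b - m).toNat, g (m + 1 + k) := by
  have hsplit : Icc a b = Icc a m ∪ Icc (m + 1) b := by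
    ext n; simp only [mem_union, mem_Icc]; omega
  rw [hsplit, sum_union (disjoint_left.2 fun n h h' => by simp only [mem_Icc] at h h'; omega)]
  congr 1
  · refine sum_nbij' (fun n => (m - n).toNat) (fun k => m - k) ?_ ?_ ?_ ?_ ?_ <;>
      intro n hn <;> simp only [mem_Icc, mem_range] at hn ⊢ <;> first | omega | congr 1; omega
  · refine sum_nbij' (fun n => (n - m - 1).toNat) (fun k => m + 1 + k) ?_ ?_ ?_ ?_ ?_ <;>
      intro n hn <;> simp only [mem_Icc, mem_range] at hn ⊢ <;> first | omega | congr 1; omega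

theorem hasDerivAt_log_add_sqrt {ρ s : ℝ} (hs : 0 ≤ s) (hsρ : 0 < s ^ 2 + ρ ^ 2) :
    HasDerivAt (fun t => log (t + √(t ^ 2 + ρ ^ 2))) (1 / √(s ^ 2 + ρ ^ 2)) s := by
  have hsq : HasDerivAt (fun t => t ^ 2 + ρ ^ 2) (2 * s) s := by
    simpa using (hasDerivAt_pow 2 s).add_const (ρ ^ 2)
  have hsum : HasDerivAt (fun t => t + √(t ^ 2 + ρ ^ 2)) (1 + 2 * s / (2 * √(s ^ 2 + ρ ^ 2))) s :=
    (hasDerivAt_id s).add (hsq.sqrt hsρ.ne')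
  refine (hsum.log (by positivity)).congr_deriv ?_
  field_simp
  ring

theorem integral_one_div_sqrt_sq_add_sq_s4 {ρ a b : ℝ} (ha : 0 ≤ a) (hab : a ≤ b)
    (haρ : 0 < a ^ 2 + ρ ^ 2) :
    ∫ s in a..b, 1 / √(s ^ 2 + ρ ^ 2) =
      log (b + √(b ^ 2 + ρ ^ 2)) - log (a + √(a ^ 2 + ρ ^ 2)) := by
  have hpos : ∀ s ∈ Set.uIcc a b, 0 ≤ s ∧ 0 < s ^ 2 + ρ ^ 2 := by
    intro s hs
    rw [Set.uIcc_of_le hab] at hs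
    exact ⟨ha.trans hs.1, by nlinarith [hs.1]⟩
  refine intervalIntegral.integral_eq_sub_of_hasDerivAt
    (fun s hs => hasDerivAt_log_add_sqrt (hpos s hs).1 (hpos s hs).2) ?_
  refine ContinuousOn.intervalIntegrable fun s hs => ContinuousAt.continuousWithinAt ?_
  exact continuousAt_const.div (by fun_prop) (sqrt_pos.2 (hpos s hs).2).ne'

theorem log_add_sqrt_sub_le_sum {ρ x ε : ℝ} (hx : 0 ≤ x) (hxρ : 0 < x ^ 2 + ρ ^ 2) (hε : 0 < ε)
    (N : ℕ) :
    log (x + N * ε + √((x + N * ε) ^ 2 + ρ ^ 2)) - log (x + √(x ^ 2 + ρ ^ 2)) ≤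
      ε * ∑ k ∈ range N, 1 / √((x + k * ε) ^ 2 + ρ ^ 2) := by
  set φ : ℝ → ℝ := fun s => 1 / √(s ^ 2 + ρ ^ 2)
  have hanti : AntitoneOn (fun t => φ (ε * t + x)) (Set.Icc 0 (0 + N)) := by
    intro t ht t' ht' htt'
    have h0 : 0 ≤ ε * t := mul_nonneg hε.le ht.1
    have h1 : ε * t ≤ ε * t' := mul_le_mul_of_nonneg_left htt' hε.le
    exact one_div_le_one_div_of_le (sqrt_pos.2 (by nlinarith)) (sqrt_le_sqrt (by nlinarith))
  have hint := hanti.integral_le_sum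
  rw [intervalIntegral.integral_comp_mul_add φ hε.ne', zero_add, mul_zero, zero_add,
    integral_one_div_sqrt_sq_add_sq_s4 hx (by nlinarith [hε, N.cast_nonneg (α := ℝ)]) hxρ,
    smul_eq_mul, inv_mul_le_iff₀ hε] at hint
  simpa only [φ, zero_add, mul_comm ε, add_comm _ x] using hint

theorem log_two_mul_le_log_add_sqrt {s : ℝ} (ρ : ℝ) (hs : 0 < s) :
    log (2 * s) ≤ log (s + √(s ^ 2 + ρ ^ 2)) := by
  refine log_le_log (by positivity) ?_
  have : s ≤ √(s ^ 2 + ρ ^ 2) := le_sqrt_of_sq_le (by nlinarith)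
  linarith

theorem log_add_sqrt_le {ρ s : ℝ} (hρ : 0 ≤ ρ) (hs : 0 ≤ s) (hsρ : 0 < s + ρ) :
    log (s + √(s ^ 2 + ρ ^ 2)) ≤ log (2 * s + ρ) := by
  have hlow : ρ ≤ √(s ^ 2 + ρ ^ 2) := le_sqrt_of_sq_le (by nlinarith)
  have hup : √(s ^ 2 + ρ ^ 2) ≤ s + ρ := sqrt_le_iff.2 ⟨by positivity, by nlinarith⟩
  exact log_le_log (by linarith) (by linarith)

theorem log_add_sqrt_add_log_add_sqrt_le {ρ α β : ℝ} (hρ : 0 ≤ ρ) (hα : 0 ≤ α) (hβ : 0 ≤ β)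
    (hαρ : 0 < α + ρ) (hβρ : 0 < β + ρ) :
    log (α + √(α ^ 2 + ρ ^ 2)) + log (β + √(β ^ 2 + ρ ^ 2)) ≤ 2 * log (α + β + ρ) := by
  have hprod : (2 * α + ρ) * (2 * β + ρ) ≤ (α + β + ρ) ^ 2 := by nlinarith [sq_nonneg (α - β)]
  calc _ ≤ log (2 * α + ρ) + log (2 * β + ρ) :=
        add_le_add (log_add_sqrt_le hρ hα hαρ) (log_add_sqrt_le hρ hβ hβρ)
    _ = log ((2 * α + ρ) * (2 * β + ρ)) := (log_mul (by linarith) (by linarith)).symm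
    _ ≤ log ((α + β + ρ) ^ 2) := log_le_log (mul_pos (by linarith) (by linarith)) hprod
    _ = 2 * log (α + β + ρ) := by rw [log_pow, Nat.cast_ofNat]

theorem log_le_mul_sum_one_div_sqrt {ρ u ε : ℝ} (hρ : 0 ≤ ρ) (hε : 0 < ε) {m : ℤ}
    (hm : u + m * ε ≤ 0) (hm' : 0 < u + (m + 1) * ε) (hρm : 0 < (u + m * ε) ^ 2 + ρ ^ 2)
    {j : ℕ} (hj : -(j : ℤ) ≤ m) (hj' : m < j) :
    log (2 * (-u + (j + 1) * ε)) + log (2 * (u + (j + 1) * ε)) - 2 * log (ε + ρ) ≤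
      ε * ∑ n ∈ Icc (-(j : ℤ)) j, 1 / √((u + n * ε) ^ 2 + ρ ^ 2) := by
  set α := -(u + m * ε) with hα
  set β := u + (m + 1) * ε with hβ
  have hαρ : 0 < α ^ 2 + ρ ^ 2 := by rw [hα, neg_sq]; exact hρm
  have hN₁ : (((m + 1 - -(j : ℤ)).toNat : ℕ) : ℝ) = m + 1 + j := by
    exact_mod_cast (by omega : ((m + 1 - -(j : ℤ)).toNat : ℤ) = m + 1 + j)
  have hN₂ : (((j - m).toNat : ℕ) : ℝ) = j - m := by
    exact_mod_cast (by omega : (((j : ℤ) - m).toNat : ℤ) = j - m)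
  have hj₁ : (1 : ℝ) ≤ m + 1 + j := by exact_mod_cast (by omega : (1 : ℤ) ≤ m + 1 + j)
  have hj₂ : (1 : ℝ) ≤ j - m := by exact_mod_cast (by omega : (1 : ℤ) ≤ j - m)
  have hL := log_add_sqrt_sub_le_sum (ρ := ρ) (by linarith) hαρ hε (m + 1 - -(j : ℤ)).toNat
  have hR := log_add_sqrt_sub_le_sum (ρ := ρ) hm'.le (by nlinarith) hε (j - m).toNat
  rw [hN₁, show α + (m + 1 + j) * ε = -u + (j + 1) * ε by ring] at hL
  rw [hN₂, show β + (j - m) * ε = u + (j + 1) * ε by ring] at hR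
  rw [sum_Icc_int_eq_sum_range_add_sum_range _ m (by omega) (by omega)]
  have hLsum : ∑ k ∈ range (m + 1 - -(j : ℤ)).toNat, 1 / √((u + ((m - k : ℤ) : ℝ) * ε) ^ 2 + ρ ^ 2)
      = ∑ k ∈ range (m + 1 - -(j : ℤ)).toNat, 1 / √((α + k * ε) ^ 2 + ρ ^ 2) := by
    refine sum_congr rfl fun k _ => ?_
    simp only [hα]
    push_cast
    ring_nf
  have hRsum : ∑ k ∈ range (j - m).toNat, 1 / √((u + ((m + 1 + k : ℤ) : ℝ) * ε) ^ 2 + ρ ^ 2)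
      = ∑ k ∈ range (j - m).toNat, 1 / √((β + k * ε) ^ 2 + ρ ^ 2) := by
    refine sum_congr rfl fun k _ => ?_
    simp only [hβ]
    push_cast
    ring_nf
  rw [hLsum, hRsum, mul_add ε]
  have hεαβ : α + β + ρ = ε + ρ := by ring
  have hαρ' : 0 < α + ρ := by
    by_contra h
    nlinarith
  have hpair := log_add_sqrt_add_log_add_sqrt_le (α := α) (β := β) hρ (by linarith) hm'.le
    hαρ' (by linarith)
  rw [hεαβ] at hpair
  have hLlog := log_two_mul_le_log_add_sqrt ρ (show 0 < -u + (j + 1) * ε by nlinarith)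
  have hRlog := log_two_mul_le_log_add_sqrt ρ (show 0 < u + (j + 1) * ε by nlinarith)
  linarith

theorem sum_Icc_neg_abs_eq_add_harmonic {a : ℤ → ℝ} {ε : ℝ}
    (ha : ∀ n : ℤ, n ≠ 0 → a n = 1 / ((|n| : ℝ) * ε)) (j : ℕ) :
    ∑ n ∈ Icc (-(j : ℤ)) j, a |n| = a 0 + 2 * harmonic j / ε := by
  have hterm : ∀ (k : ℕ) (n : ℤ), |n| = k + 1 → a |n| = ((k + 1 : ℕ) : ℝ)⁻¹ / ε := by
    intro k n hn
    rw [hn, ha _ (by omega), one_div, mul_inv, div_eq_mul_inv]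
    push_cast
    rw [abs_of_nonneg (by positivity)]
  rw [sum_Icc_int_eq_sum_range_add_sum_range _ 0 (by omega) (by omega),
    show (0 + 1 - -(j : ℤ)).toNat = j + 1 by omega, show ((j : ℤ) - 0).toNat = j by omega,
    sum_range_succ', sum_congr rfl fun k _ => hterm k _ ((abs_eq (by positivity)).2 (by omega)),
    sum_congr rfl fun k _ => hterm k _ ((abs_eq (by positivity)).2 (by omega)), ← sum_div, harmonic]
  push_cast
  ring_nf

theorem tendsto_log_two_mul_sub_log {ε : ℝ} (v : ℝ) (hε : 0 < ε) :
    Tendsto (fun j : ℕ => log (2 * (v + (j + 1) * ε)) - log j) atTop (𝓝 (log (2 * ε))) := by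
  have hlim : Tendsto (fun j : ℕ => 2 * ε + (2 * v + 2 * ε) / j) atTop (𝓝 (2 * ε)) := by
    simpa using tendsto_const_nhds.add (tendsto_const_div_atTop_nhds_zero_nat (2 * v + 2 * ε))
  refine (hlim.log (by positivity)).congr' ?_
  have hlarge : ∀ᶠ j : ℕ in atTop, -v ≤ j * ε ∧ 1 ≤ j :=
    ((tendsto_natCast_atTop_atTop.atTop_mul_const hε).eventually_ge_atTop (-v)).and
      (eventually_ge_atTop 1)
  filter_upwards [hlarge] with j ⟨hjv, hj⟩
  have hj : (1 : ℝ) ≤ j := by exact_mod_cast hj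
  rw [← log_div (by nlinarith) (by positivity)]
  congr 1
  field_simp
  ring

theorem neg_log_div_le_of_tendsto_lattice_sum {a : ℤ → ℝ} {ε ρ u V : ℝ} (hε : 0 < ε)
    (hρ : 0 ≤ ρ) (ha0 : a 0 = 2 * (-eulerMascheroniConstant + log (2 * ε)) / ε)
    (ha : ∀ n : ℤ, n ≠ 0 → a n = 1 / ((|n| : ℝ) * ε))
    (hlattice : ∀ n : ℤ, 0 < (u + n * ε) ^ 2 + ρ ^ 2)
    (hV : Tendsto (fun j : ℕ => (1 / (4 * π)) * ∑ n ∈ Icc (-(j : ℤ)) j,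
        (1 / √((u + n * ε) ^ 2 + ρ ^ 2) - a |n|)) atTop (𝓝 V)) :
    -(log (ε + ρ) / (2 * π * ε)) ≤ V := by
  set m : ℤ := ⌊-u / ε⌋
  have hm : u + m * ε ≤ 0 := by
    have := (le_div_iff₀ hε).1 (Int.floor_le (-u / ε)); linarith
  have hm' : 0 < u + (m + 1) * ε := by
    have := (div_lt_iff₀ hε).1 (Int.lt_floor_add_one (-u / ε)); linarith
  set B : ℕ → ℝ := fun j => (1 / (4 * π)) * (((log (2 * (-u + (j + 1) * ε)) - log j) +
    (log (2 * (u + (j + 1) * ε)) - log j) - 2 * log (ε + ρ) - ε * a 0 -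
    2 * (harmonic j - log j)) / ε)
  have hB : Tendsto B atTop (𝓝 (-(log (ε + ρ) / (2 * π * ε)))) := by
    have hlim := ((((tendsto_log_two_mul_sub_log (-u) hε).add
      (tendsto_log_two_mul_sub_log u hε)).sub_const (2 * log (ε + ρ))).sub_const (ε * a 0)).sub
      (tendsto_harmonic_sub_log.const_mul 2) |>.div_const ε |>.const_mul (1 / (4 * π))
    convert hlim using 2
    rw [ha0]
    field_simp
    ring
  refine le_of_tendsto_of_tendsto hB hV ?_
  filter_upwards [eventually_ge_atTop (m.natAbs + 1)] with j hj
  have hsum := log_le_mul_sum_one_div_sqrt hρ hε hm hm' (hlattice m) (j := j) (by omega) (by omega)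
  rw [sum_sub_distrib, sum_Icc_neg_abs_eq_add_harmonic ha]
  set S := ∑ n ∈ Icc (-(j : ℤ)) j, 1 / √((u + n * ε) ^ 2 + ρ ^ 2)
  have hexpand : (S - (a 0 + 2 * harmonic j / ε)) * ε = ε * S - ε * a 0 - 2 * harmonic j := by
    field_simp
    ring
  refine mul_le_mul_of_nonneg_left ((div_le_iff₀ hε).2 ?_) (by positivity)
  linarith

theorem exists_log_add_norm_lt {E : Type*} [NormedAddCommGroup E] [ProperSpace E] {g : E → ℝ}
    {r : ℝ} (hr : 0 < r) (hg : ContinuousOn g (closedBall 0 r))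
    (hlog : ∀ y : E, 0 < ‖y‖ → ‖y‖ ≤ r → log ‖y‖ < g y) :
    ∃ ε₀ > 0, ∀ ε, 0 < ε → ε < ε₀ → ∀ y ∈ closedBall (0 : E) r, log (ε + ‖y‖) < g y := by
  obtain ⟨c, hc⟩ := (isCompact_closedBall (0 : E) r).bddBelow_image hg
  set ρ₁ := min r (exp c / 2)
  have hρ₁ : 0 < ρ₁ := lt_min hr (by positivity)
  have hK : IsCompact (closedBall (0 : E) r ∩ {y | ρ₁ ≤ ‖y‖}) :=
    (isCompact_closedBall 0 r).inter_right (isClosed_le continuous_const continuous_norm)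
  have hgap : ContinuousOn (fun y => g y - log ‖y‖) (closedBall (0 : E) r ∩ {y | ρ₁ ≤ ‖y‖}) :=
    (hg.mono Set.inter_subset_left).sub fun y hy =>
      (continuous_norm.continuousAt.log (hρ₁.trans_le hy.2).ne').continuousWithinAt
  obtain ⟨δ, hδ, hδK⟩ := hK.exists_forall_le' hgap fun y hy =>
    sub_pos.2 (hlog y (hρ₁.trans_le hy.2) (mem_closedBall_zero_iff.1 hy.1))
  refine ⟨min (exp c / 2) (δ * ρ₁), by positivity, fun ε hε hεε₀ y hy => ?_⟩
  rcases lt_or_ge ‖y‖ ρ₁ with hsmall | hlarge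
  · have hεy : ε + ‖y‖ < exp c := by
      linarith [min_le_left (exp c / 2) (δ * ρ₁), min_le_right r (exp c / 2)]
    calc log (ε + ‖y‖) < c := (log_lt_iff_lt_exp (by positivity)).2 hεy
      _ ≤ g y := hc ⟨y, hy, rfl⟩
  · have hy₀ : 0 < ‖y‖ := hρ₁.trans_le hlarge
    have hlog_add : log (ε + ‖y‖) ≤ log ‖y‖ + ε / ‖y‖ := by
      have := log_le_sub_one_of_pos (show 0 < (ε + ‖y‖) / ‖y‖ by positivity)
      rw [log_div (by positivity) hy₀.ne'] at this
      have h : (ε + ‖y‖) / ‖y‖ - 1 = ε / ‖y‖ := by field_simp; ring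
      linarith
    have hε_div : ε / ‖y‖ < δ := by
      rw [div_lt_iff₀ hy₀]
      nlinarith [min_le_right (exp c / 2) (δ * ρ₁)]
    have := hδK y ⟨hy, hlarge⟩
    linarith

theorem statement4_general
    (a : ℝ → ℤ → ℝ)
    (ha0 : ∀ ε : ℝ, 0 < ε →
      a ε 0 = 2 * (-Real.eulerMascheroniConstant + Real.log (2 * ε)) / ε)
    (ha : ∀ ε : ℝ, 0 < ε → ∀ n : ℤ, n ≠ 0 → a ε n = 1 / ((|n| : ℝ) * ε))
    (V₀ : ℝ → ℝ → ℂ → ℝ)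
    (hV : ∀ ε : ℝ, 0 < ε → ∀ (u : ℝ) (y : ℂ),
      ¬ (y = 0 ∧ ∃ n : ℤ, u = (n : ℝ) * ε) → ‖y‖ < 1 →
      Tendsto (fun j : ℕ => (1 / (4 * π)) * ∑ n ∈ Finset.Icc (-(j : ℤ)) (j : ℤ),
          (1 / Real.sqrt ((u + (n : ℝ) * ε) ^ 2 + ‖y‖ ^ 2) - a ε |n|))
        atTop (nhds (V₀ ε u y)))
    (r : ℝ) (hr0 : 0 < r) (hr1 : r ≤ 1)
    (f : ℂ → ℝ)
    (hfc : ContinuousOn f (closedBall (0:ℂ) r))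
    (hpos : ∀ y : ℂ, 0 < ‖y‖ → ‖y‖ ≤ r →
      0 < f y - (1 / (4 * π)) * Real.log (‖y‖ ^ 2)) :
    ∃ ε₀ : ℝ, 0 < ε₀ ∧ ∀ ε : ℝ, 0 < ε → ε < ε₀ →
      ∀ (u : ℝ) (y : ℂ), ‖y‖ < r →
        ¬ (y = 0 ∧ ∃ n : ℤ, u = (n : ℝ) * ε) →
        0 < V₀ ε u y + f y / ε := by
  have hlog : ∀ y : ℂ, 0 < ‖y‖ → ‖y‖ ≤ r → log ‖y‖ < 2 * π * f y := by
    intro y hy hyr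
    have h := hpos y hy hyr
    rw [log_pow, Nat.cast_ofNat] at h
    field_simp at h
    linarith
  obtain ⟨ε₀, hε₀, hlog_add⟩ := exists_log_add_norm_lt (g := fun y => 2 * π * f y) hr0
    (continuousOn_const.mul hfc) hlog
  refine ⟨ε₀, hε₀, fun ε hε hεε₀ u y hy hexc => ?_⟩
  have hlattice : ∀ n : ℤ, 0 < (u + n * ε) ^ 2 + ‖y‖ ^ 2 := by
    intro n
    rcases eq_or_ne y 0 with rfl | hy₀
    · have : u + n * ε ≠ 0 := fun h => hexc ⟨rfl, -n, by push_cast; linarith⟩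
      positivity
    · positivity
  have hV₀ := neg_log_div_le_of_tendsto_lattice_sum hε (norm_nonneg y) (ha0 ε hε) (ha ε hε)
    hlattice (hV ε hε u y hexc (hy.trans_le hr1))
  have hgap := hlog_add ε hε hεε₀ y (mem_closedBall_zero_iff.2 hy.le)
  have hsplit : f y / ε - log (ε + ‖y‖) / (2 * π * ε) =
      (2 * π * f y - log (ε + ‖y‖)) / (2 * π * ε) := by
    field_simp
  have : 0 < (2 * π * f y - log (ε + ‖y‖)) / (2 * π * ε) :=
    div_pos (by linarith) (by positivity)
  linarith

/-- If `0 < r ≤ 1` and `f` is harmonic on the disc `D_r` with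
`f(y) - (1/4π) log|y|² > 0` for `0 < |y| ≤ r`, then `V₀ + f(y)/ε > 0` on
`(D_r × ℝ) \ ({0} × εℤ)` for all sufficiently small `ε > 0`. -/
theorem statement4
    (a : ℝ → ℤ → ℝ)
    (ha0 : ∀ ε : ℝ, 0 < ε →
      a ε 0 = 2 * (-Real.eulerMascheroniConstant + Real.log (2 * ε)) / ε)
    (ha : ∀ ε : ℝ, 0 < ε → ∀ n : ℤ, n ≠ 0 → a ε n = 1 / ((|n| : ℝ) * ε))
    (V₀ : ℝ → ℝ → ℂ → ℝ)
    (hV : ∀ ε : ℝ, 0 < ε → ∀ (u : ℝ) (y : ℂ),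
      ¬ (y = 0 ∧ ∃ n : ℤ, u = (n : ℝ) * ε) → ‖y‖ < 1 →
      Tendsto (fun j : ℕ => (1 / (4 * π)) * ∑ n ∈ Finset.Icc (-(j : ℤ)) (j : ℤ),
          (1 / Real.sqrt ((u + (n : ℝ) * ε) ^ 2 + ‖y‖ ^ 2) - a ε |n|))
        atTop (nhds (V₀ ε u y)))
    (r : ℝ) (hr0 : 0 < r) (hr1 : r ≤ 1)
    (f : ℂ → ℝ)
    (hfc : ContinuousOn f (closedBall (0:ℂ) r))
    (hharm : ∀ y ∈ ball (0:ℂ) r, ContDiffAt ℝ 2 f y ∧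
      cpd 1 (cpd 1 f) y + cpd Complex.I (cpd Complex.I f) y = 0)
    (hpos : ∀ y : ℂ, 0 < ‖y‖ → ‖y‖ ≤ r →
      0 < f y - (1 / (4 * π)) * Real.log (‖y‖ ^ 2)) :
    ∃ ε₀ : ℝ, 0 < ε₀ ∧ ∀ ε : ℝ, 0 < ε → ε < ε₀ →
      ∀ (u : ℝ) (y : ℂ), ‖y‖ < r →
        ¬ (y = 0 ∧ ∃ n : ℤ, u = (n : ℝ) * ε) →
        0 < V₀ ε u y + f y / ε :=
  statement4_general a ha0 ha V₀ hV r hr0 hr1 f hfc hpos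
end

section
/- For the Gibbons–Hawking metric ds² = V du·du + V^{−1}θ₀² associated to a positive harmonic function V, the squared norm of the Riemann curvature tensor satisfies ‖R‖² = 12 V^{−6}|∇V|⁴ + V^{−4} Δ(|∇V|²) − 6 V^{−5} ∇V · ∇(|∇V|²), which equals (1/2) V^{−1} Δ Δ (V^{−1}). -/
open Real

/-- Directional derivative of a function on `ℝ × ℝ × ℝ`. -/
noncomputable def pd3 (v : ℝ × ℝ × ℝ) (f : ℝ × ℝ × ℝ → ℝ) (p : ℝ × ℝ × ℝ) : ℝ :=
  fderiv ℝ f p v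

/-- The Euclidean Laplacian on `ℝ × ℝ × ℝ`. -/
noncomputable def lap3 (f : ℝ × ℝ × ℝ → ℝ) (p : ℝ × ℝ × ℝ) : ℝ :=
  pd3 (1, 0, 0) (pd3 (1, 0, 0) f) p + pd3 (0, 1, 0) (pd3 (0, 1, 0) f) p
    + pd3 (0, 0, 1) (pd3 (0, 0, 1) f) p

/-- The squared Euclidean norm of the gradient `|∇f|²`. -/
noncomputable def gradSq (f : ℝ × ℝ × ℝ → ℝ) (p : ℝ × ℝ × ℝ) : ℝ :=
  pd3 (1, 0, 0) f p ^ 2 + pd3 (0, 1, 0) f p ^ 2 + pd3 (0, 0, 1) f p ^ 2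

/-- The dot product `∇f · ∇g`. -/
noncomputable def gradDot (f g : ℝ × ℝ × ℝ → ℝ) (p : ℝ × ℝ × ℝ) : ℝ :=
  pd3 (1, 0, 0) f p * pd3 (1, 0, 0) g p + pd3 (0, 1, 0) f p * pd3 (0, 1, 0) g p
    + pd3 (0, 0, 1) f p * pd3 (0, 0, 1) g p

section Toolkit

theorem pd3_congr {f g : ℝ×ℝ×ℝ→ℝ} {p} (h : f =ᶠ[nhds p] g) (v) : pd3 v f p = pd3 v g p := by
  unfold pd3; rw [h.fderiv_eq]

theorem eqOn_pd3 {U : Set (ℝ×ℝ×ℝ)} (hU : IsOpen U) {f g} (h : Set.EqOn f g U) (v) :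
    Set.EqOn (pd3 v f) (pd3 v g) U := fun q hq =>
  pd3_congr (Filter.eventuallyEq_of_mem (hU.mem_nhds hq) h) v

theorem eqOn_lap3 {U : Set (ℝ×ℝ×ℝ)} (hU : IsOpen U) {f g} (h : Set.EqOn f g U) :
    Set.EqOn (lap3 f) (lap3 g) U := by
  intro q hq
  unfold lap3
  rw [eqOn_pd3 hU (eqOn_pd3 hU h _) _ hq, eqOn_pd3 hU (eqOn_pd3 hU h _) _ hq,
    eqOn_pd3 hU (eqOn_pd3 hU h _) _ hq]

theorem pd3_add {f g : ℝ×ℝ×ℝ→ℝ} {p} (hf : DifferentiableAt ℝ f p)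
    (hg : DifferentiableAt ℝ g p) (v) :
    pd3 v (fun q => f q + g q) p = pd3 v f p + pd3 v g p := by
  unfold pd3; rw [show (fun q => f q + g q) = f + g from rfl, fderiv_add hf hg]; rfl

theorem pd3_mul {f g : ℝ×ℝ×ℝ→ℝ} {p} (hf : DifferentiableAt ℝ f p)
    (hg : DifferentiableAt ℝ g p) (v) :
    pd3 v (fun q => f q * g q) p = pd3 v f p * g p + f p * pd3 v g p := by
  unfold pd3; rw [show (fun q => f q * g q) = f * g from rfl, fderiv_mul hf hg]
  simp [ContinuousLinearMap.add_apply, ContinuousLinearMap.smul_apply]; ring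

theorem pd3_inv {f : ℝ×ℝ×ℝ→ℝ} {p} (hf : DifferentiableAt ℝ f p) (h0 : f p ≠ 0) (v) :
    pd3 v (fun q => (f q)⁻¹) p = -((f p)⁻¹^2 * pd3 v f p) := by
  unfold pd3
  rw [show (fun q => (f q)⁻¹) = Inv.inv ∘ f from rfl,
    fderiv_comp p (differentiableAt_inv h0) hf]
  simp [fderiv_inv, inv_pow]
  ring

theorem pd3_const_mul {f : ℝ×ℝ×ℝ→ℝ} {p} (hf : DifferentiableAt ℝ f p) (c : ℝ) (v) :
    pd3 v (fun q => c * f q) p = c * pd3 v f p := by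
  unfold pd3; rw [fderiv_const_mul hf]; rfl

theorem pd3_neg {f : ℝ×ℝ×ℝ→ℝ} {p} (v) :
    pd3 v (fun q => -(f q)) p = -pd3 v f p := by
  unfold pd3; rw [show (fun q => -(f q)) = -f from rfl, fderiv_neg]; rfl

theorem pd3_pow {f : ℝ×ℝ×ℝ→ℝ} {p} (hf : DifferentiableAt ℝ f p) (n : ℕ) (v) :
    pd3 v (fun q => f q ^ (n+1)) p = (n+1 : ℝ) * f p ^ n * pd3 v f p := by
  induction n with
  | zero => simp [pow_one]
  | succ n ih =>
      have h : (fun q => f q ^ (n+1+1)) = fun q => f q ^ (n+1) * f q := by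
        funext q; ring
      rw [h, pd3_mul (f := fun q => f q ^ (n+1)) (hf.pow _) hf, ih]; push_cast; ring

theorem contDiffAt_pd3 {f : ℝ×ℝ×ℝ→ℝ} {p} (hf : ContDiffAt ℝ (⊤ : ℕ∞) f p) (v) :
    ContDiffAt ℝ (⊤ : ℕ∞) (pd3 v f) p := by
  have h1 : ContDiffAt ℝ (⊤ : ℕ∞) (fderiv ℝ f) p := hf.fderiv_right (by simp)
  exact h1.clm_apply contDiffAt_const

theorem contDiffAt_gradSq {f : ℝ×ℝ×ℝ→ℝ} {p} (hf : ContDiffAt ℝ (⊤ : ℕ∞) f p) :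
    ContDiffAt ℝ (⊤ : ℕ∞) (gradSq f) p := by
  unfold gradSq
  exact (((contDiffAt_pd3 hf _).pow 2).add ((contDiffAt_pd3 hf _).pow 2)).add
    ((contDiffAt_pd3 hf _).pow 2)

end Toolkit

section Main

variable {U : Set (ℝ × ℝ × ℝ)} {V : ℝ × ℝ × ℝ → ℝ}

/-- Second directional derivative of `V⁻¹` at a point of `U`. -/
theorem d2Inv (hU : IsOpen U) (hV : ContDiffOn ℝ (⊤ : ℕ∞) V U)
    (hne : ∀ q ∈ U, V q ≠ 0) {q} (hq : q ∈ U) (v) :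
    pd3 v (pd3 v (fun r => (V r)⁻¹)) q
      = 2*(V q)⁻¹^3 * (pd3 v V q)^2 - (V q)⁻¹^2 * pd3 v (pd3 v V) q := by
  have hEq : Set.EqOn (pd3 v (fun r => (V r)⁻¹))
      (fun r => -((V r)⁻¹^2 * pd3 v V r)) U := fun r hr =>
    pd3_inv ((hV.contDiffAt (hU.mem_nhds hr)).differentiableAt (by simp)) (hne r hr) v
  rw [pd3_congr (Filter.eventuallyEq_of_mem (hU.mem_nhds hq) hEq) v]
  have cV : ContDiffAt ℝ (⊤ : ℕ∞) V q := hV.contDiffAt (hU.mem_nhds hq)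
  have dV : DifferentiableAt ℝ V q := cV.differentiableAt (by simp)
  have dInv : DifferentiableAt ℝ (fun r => (V r)⁻¹) q := dV.inv (hne q hq)
  have dInv2 : DifferentiableAt ℝ (fun r => (V r)⁻¹^2) q := dInv.pow 2
  have dDv : DifferentiableAt ℝ (pd3 v V) q := (contDiffAt_pd3 cV v).differentiableAt (by simp)
  have h1 : (fun r => -((V r)⁻¹^2 * pd3 v V r))
      = fun r => -(((fun s => (V s)⁻¹^2) r) * pd3 v V r) := rfl
  rw [h1, pd3_neg, pd3_mul dInv2 dDv]
  have h2 : pd3 v (fun r => (V r)⁻¹^2) q = 2 * (V q)⁻¹ ^ 1 * pd3 v (fun r => (V r)⁻¹) q := by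
    have := pd3_pow (f := fun r => (V r)⁻¹) (p := q) dInv 1 v
    norm_num at this ⊢
    exact this
  rw [h2, pd3_inv dV (hne q hq)]
  ring

/-- `Δ(V⁻¹) = 2 V⁻³ |∇V|²` on `U` for harmonic `V`. -/
theorem lapInv (hU : IsOpen U) (hV : ContDiffOn ℝ (⊤ : ℕ∞) V U)
    (hne : ∀ q ∈ U, V q ≠ 0) (hharm : ∀ q ∈ U, lap3 V q = 0) :
    Set.EqOn (lap3 (fun r => (V r)⁻¹)) (fun r => 2*(V r)⁻¹^3 * gradSq V r) U := by
  intro q hq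
  have h := hharm q hq
  unfold lap3 at h ⊢
  rw [d2Inv hU hV hne hq, d2Inv hU hV hne hq, d2Inv hU hV hne hq]
  unfold gradSq
  linear_combination (-(V q)⁻¹^2) * h

/-- First derivative of `F = 2 V⁻³ |∇V|²` at points of `U`. -/
theorem dF (hU : IsOpen U) (hV : ContDiffOn ℝ (⊤ : ℕ∞) V U)
    (hne : ∀ q ∈ U, V q ≠ 0) {q} (hq : q ∈ U) (v) :
    pd3 v (fun r => 2*(V r)⁻¹^3 * gradSq V r) q
      = -6*(V q)⁻¹^4 * pd3 v V q * gradSq V q + 2*(V q)⁻¹^3 * pd3 v (gradSq V) q := by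
  have cV : ContDiffAt ℝ (⊤ : ℕ∞) V q := hV.contDiffAt (hU.mem_nhds hq)
  have dV : DifferentiableAt ℝ V q := cV.differentiableAt (by simp)
  have dInv : DifferentiableAt ℝ (fun r => (V r)⁻¹) q := dV.inv (hne q hq)
  have dInv3 : DifferentiableAt ℝ (fun r => 2*(V r)⁻¹^3) q := (dInv.pow 3).const_mul 2
  have dg : DifferentiableAt ℝ (gradSq V) q :=
    (contDiffAt_gradSq cV).differentiableAt (by simp)
  have h1 : (fun r => 2*(V r)⁻¹^3 * gradSq V r)
      = fun r => ((fun s => 2*(V s)⁻¹^3) r) * gradSq V r := rfl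
  rw [h1, pd3_mul dInv3 dg]
  have h2 : pd3 v (fun r => 2*(V r)⁻¹^3) q = 2 * pd3 v (fun r => (V r)⁻¹^3) q :=
    pd3_const_mul (dInv.pow 3) 2 v
  have h3 : pd3 v (fun r => (V r)⁻¹^3) q = 3 * (V q)⁻¹ ^ 2 * pd3 v (fun r => (V r)⁻¹) q := by
    have := pd3_pow (f := fun r => (V r)⁻¹) (p := q) dInv 2 v
    norm_num at this ⊢
    exact this
  rw [h2, h3, pd3_inv dV (hne q hq)]
  ring

/-- Second directional derivative of `F = 2 V⁻³ |∇V|²` at points of `U`. -/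
theorem d2F (hU : IsOpen U) (hV : ContDiffOn ℝ (⊤ : ℕ∞) V U)
    (hne : ∀ q ∈ U, V q ≠ 0) {q} (hq : q ∈ U) (v) :
    pd3 v (pd3 v (fun r => 2*(V r)⁻¹^3 * gradSq V r)) q
      = 24*(V q)⁻¹^5 * (pd3 v V q)^2 * gradSq V q
        - 6*(V q)⁻¹^4 * pd3 v (pd3 v V) q * gradSq V q
        - 12*(V q)⁻¹^4 * pd3 v V q * pd3 v (gradSq V) q
        + 2*(V q)⁻¹^3 * pd3 v (pd3 v (gradSq V)) q := by
  have hEq : Set.EqOn (pd3 v (fun r => 2*(V r)⁻¹^3 * gradSq V r))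
      (fun r => -6*(V r)⁻¹^4 * pd3 v V r * gradSq V r
        + 2*(V r)⁻¹^3 * pd3 v (gradSq V) r) U := fun r hr => dF hU hV hne hr v
  rw [pd3_congr (Filter.eventuallyEq_of_mem (hU.mem_nhds hq) hEq) v]
  have cV : ContDiffAt ℝ (⊤ : ℕ∞) V q := hV.contDiffAt (hU.mem_nhds hq)
  have dV : DifferentiableAt ℝ V q := cV.differentiableAt (by simp)
  have dInv : DifferentiableAt ℝ (fun r => (V r)⁻¹) q := dV.inv (hne q hq)
  have dInv4 : DifferentiableAt ℝ (fun r => -6*(V r)⁻¹^4) q := (dInv.pow 4).const_mul (-6)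
  have dInv3 : DifferentiableAt ℝ (fun r => 2*(V r)⁻¹^3) q := (dInv.pow 3).const_mul 2
  have cDv : ContDiffAt ℝ (⊤ : ℕ∞) (pd3 v V) q := contDiffAt_pd3 cV v
  have dDv : DifferentiableAt ℝ (pd3 v V) q := cDv.differentiableAt (by simp)
  have cg : ContDiffAt ℝ (⊤ : ℕ∞) (gradSq V) q := contDiffAt_gradSq cV
  have dg : DifferentiableAt ℝ (gradSq V) q := cg.differentiableAt (by simp)
  have dDg : DifferentiableAt ℝ (pd3 v (gradSq V)) q :=
    (contDiffAt_pd3 cg v).differentiableAt (by simp)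
  have h1 : (fun r => -6*(V r)⁻¹^4 * pd3 v V r * gradSq V r
        + 2*(V r)⁻¹^3 * pd3 v (gradSq V) r)
      = fun r => ((fun s => ((fun t => -6*(V t)⁻¹^4) s) * pd3 v V s) r) * gradSq V r
        + ((fun s => 2*(V s)⁻¹^3) r) * pd3 v (gradSq V) r := rfl
  rw [h1, pd3_add (f := fun r => (fun s => (fun t => -6*(V t)⁻¹^4) s * pd3 v V s) r * gradSq V r)
      (g := fun r => (fun s => 2*(V s)⁻¹^3) r * pd3 v (gradSq V) r)
      ((dInv4.mul dDv).mul dg) (dInv3.mul dDg),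
    pd3_mul (f := fun s => (fun t => -6*(V t)⁻¹^4) s * pd3 v V s) (dInv4.mul dDv) dg, pd3_mul dInv4 dDv, pd3_mul dInv3 dDg]
  have h2 : pd3 v (fun r => -6*(V r)⁻¹^4) q = -6 * pd3 v (fun r => (V r)⁻¹^4) q :=
    pd3_const_mul (dInv.pow 4) (-6) v
  have h3 : pd3 v (fun r => (V r)⁻¹^4) q = 4 * (V q)⁻¹ ^ 3 * pd3 v (fun r => (V r)⁻¹) q := by
    have := pd3_pow (f := fun r => (V r)⁻¹) (p := q) dInv 3 v
    norm_num at this ⊢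
    exact this
  have h4 : pd3 v (fun r => 2*(V r)⁻¹^3) q = 2 * pd3 v (fun r => (V r)⁻¹^3) q :=
    pd3_const_mul (dInv.pow 3) 2 v
  have h5 : pd3 v (fun r => (V r)⁻¹^3) q = 3 * (V q)⁻¹ ^ 2 * pd3 v (fun r => (V r)⁻¹) q := by
    have := pd3_pow (f := fun r => (V r)⁻¹) (p := q) dInv 2 v
    norm_num at this ⊢
    exact this
  rw [h2, h3, h4, h5, pd3_inv dV (hne q hq)]
  ring

end Main

/-- For a smooth positive harmonic function `V` on an open subset of `ℝ³`,
the curvature norm of the Gibbons–Hawking metric satisfies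
`‖R‖² = 12 V⁻⁶|∇V|⁴ + V⁻⁴ Δ(|∇V|²) - 6 V⁻⁵ ∇V·∇(|∇V|²) = (1/2) V⁻¹ ΔΔ(V⁻¹)`;
the assertion verified here is the underlying algebraic identity. -/
theorem statement10 (U : Set (ℝ × ℝ × ℝ)) (hU : IsOpen U)
    (V : ℝ × ℝ × ℝ → ℝ) (hV : ContDiffOn ℝ (⊤ : ℕ∞) V U)
    (hVpos : ∀ p ∈ U, 0 < V p)
    (hharm : ∀ p ∈ U, lap3 V p = 0) :
    ∀ p ∈ U,
      (1 / 2) * (V p)⁻¹ * lap3 (lap3 (fun q => (V q)⁻¹)) p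
        = 12 * (V p)⁻¹ ^ 6 * gradSq V p ^ 2
          + (V p)⁻¹ ^ 4 * lap3 (gradSq V) p
          - 6 * (V p)⁻¹ ^ 5 * gradDot V (gradSq V) p := by
  intro p hp
  have hne : ∀ q ∈ U, V q ≠ 0 := fun q hq => (hVpos q hq).ne'
  have hB : lap3 (lap3 (fun q => (V q)⁻¹)) p
      = lap3 (fun r => 2*(V r)⁻¹^3 * gradSq V r) p :=
    eqOn_lap3 hU (lapInv hU hV hne hharm) hp
  rw [hB]
  have hh := hharm p hp
  unfold lap3 at hh ⊢
  rw [d2F hU hV hne hp, d2F hU hV hne hp, d2F hU hV hne hp]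
  unfold gradSq gradDot
  linear_combination (-3*(V p)⁻¹^5 * (pd3 (1,0,0) V p^2 + pd3 (0,1,0) V p^2 + pd3 (0,0,1) V p^2)) * hh
end

section
/- Let τ₁(y), τ₂(y) be holomorphic functions on an open set B ⊆ ℂ with Im(τ̄₁τ₂) > 0 everywhere, and let ε > 0. Define W = ε/Im(τ̄₁τ₂) and b = −(W/ε)[Im(τ₂x̄)∂_yτ₁ + Im(τ̄₁x)∂_yτ₂] on B × ℂ (coordinates (y,x)). Then the pair (W, b) satisfies the Ricci-flatness equations (∂_y − b∂_x)b̄ = −W^{−3}∂_xW and (∂_y − b∂_x)W = W∂_xb, i.e., the standard semi-flat form ω = (i/2)(W(dx+bdy)∧conj(dx+bdy) + W^{−1}dy∧dȳ) is closed. -/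
open Real Complex ComplexConjugate

namespace SemiFlat

/-- The Wirtinger derivative `∂_x` (first coordinate, the fibre coordinate)
of `f : ℂ × ℂ → ℂ`. -/
noncomputable def wdx (f : ℂ × ℂ → ℂ) (z : ℂ × ℂ) : ℂ :=
  (fderiv ℝ f z (1, 0) - Complex.I * fderiv ℝ f z (Complex.I, 0)) / 2

/-- The Wirtinger derivative `∂_y` (second coordinate, the base coordinate)
of `f : ℂ × ℂ → ℂ`. -/
noncomputable def wdy (f : ℂ × ℂ → ℂ) (z : ℂ × ℂ) : ℂ :=
  (fderiv ℝ f z (0, 1) - Complex.I * fderiv ℝ f z (0, Complex.I)) / 2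

/-- The real-linear map `v ↦ a v₁ + b v̄₁ + c v₂ + d v̄₂`. -/
noncomputable def wmap (a b c d : ℂ) : ℂ × ℂ →L[ℝ] ℂ :=
  a • (ContinuousLinearMap.fst ℝ ℂ ℂ)
  + b • ((Complex.conjCLE : ℂ ≃L[ℝ] ℂ).toContinuousLinearMap.comp
      (ContinuousLinearMap.fst ℝ ℂ ℂ))
  + c • (ContinuousLinearMap.snd ℝ ℂ ℂ)
  + d • ((Complex.conjCLE : ℂ ≃L[ℝ] ℂ).toContinuousLinearMap.comp
      (ContinuousLinearMap.snd ℝ ℂ ℂ))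

lemma wmap_apply (a b c d : ℂ) (v : ℂ × ℂ) :
    wmap a b c d v = a * v.1 + b * conj v.1 + c * v.2 + d * conj v.2 := by
  simp [wmap, smul_eq_mul]

/-- `f` has real derivative `a dx + b dx̄ + c dy + d dȳ` at `z`. -/
def Wdd (f : ℂ × ℂ → ℂ) (z : ℂ × ℂ) (a b c d : ℂ) : Prop :=
  HasFDerivAt f (wmap a b c d) z

namespace Wdd

variable {f g : ℂ × ℂ → ℂ} {z : ℂ × ℂ} {a b c d a' b' c' d' a₂ b₂ c₂ d₂ : ℂ}

lemma wdx_eq (h : Wdd f z a b c d) : wdx f z = a := by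
  unfold wdx
  rw [HasFDerivAt.fderiv h, wmap_apply, wmap_apply]
  simp only [map_one, Complex.conj_I, map_zero]
  linear_combination (b - a) / 2 * Complex.I_sq

lemma wdy_eq (h : Wdd f z a b c d) : wdy f z = c := by
  unfold wdy
  rw [HasFDerivAt.fderiv h, wmap_apply, wmap_apply]
  simp only [map_one, Complex.conj_I, map_zero]
  linear_combination (d - c) / 2 * Complex.I_sq

lemma of_eq (h : Wdd f z a b c d) (ha : a = a') (hb : b = b') (hc : c = c')
    (hd : d = d') : Wdd f z a' b' c' d' := by
  rw [← ha, ← hb, ← hc, ← hd]; exact h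

lemma fst : Wdd (fun q => q.1) z 1 0 0 0 := by
  have h : wmap 1 0 0 0 = ContinuousLinearMap.fst ℝ ℂ ℂ := by
    apply ContinuousLinearMap.ext; intro v; simp [wmap_apply]
  unfold Wdd; rw [h]
  exact (ContinuousLinearMap.fst ℝ ℂ ℂ).hasFDerivAt

lemma snd : Wdd (fun q => q.2) z 0 0 1 0 := by
  have h : wmap 0 0 1 0 = ContinuousLinearMap.snd ℝ ℂ ℂ := by
    apply ContinuousLinearMap.ext; intro v; simp [wmap_apply]
  unfold Wdd; rw [h]
  exact (ContinuousLinearMap.snd ℝ ℂ ℂ).hasFDerivAt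

lemma const (k : ℂ) : Wdd (fun _ => k) z 0 0 0 0 := by
  have h : wmap 0 0 0 0 = (0 : ℂ × ℂ →L[ℝ] ℂ) := by
    apply ContinuousLinearMap.ext; intro v; simp [wmap_apply]
  unfold Wdd; rw [h]
  exact hasFDerivAt_const k z

lemma add (hf : Wdd f z a b c d) (hg : Wdd g z a₂ b₂ c₂ d₂) :
    Wdd (fun q => f q + g q) z (a + a₂) (b + b₂) (c + c₂) (d + d₂) := by
  have h := HasFDerivAt.add hf hg
  have heq : wmap a b c d + wmap a₂ b₂ c₂ d₂ = wmap (a + a₂) (b + b₂) (c + c₂) (d + d₂) := by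
    apply ContinuousLinearMap.ext; intro v
    simp [wmap_apply]; ring
  unfold Wdd; rw [← heq]; exact h

lemma sub (hf : Wdd f z a b c d) (hg : Wdd g z a₂ b₂ c₂ d₂) :
    Wdd (fun q => f q - g q) z (a - a₂) (b - b₂) (c - c₂) (d - d₂) := by
  have h := HasFDerivAt.sub hf hg
  have heq : wmap a b c d - wmap a₂ b₂ c₂ d₂ = wmap (a - a₂) (b - b₂) (c - c₂) (d - d₂) := by
    apply ContinuousLinearMap.ext; intro v
    simp [wmap_apply]; ring
  unfold Wdd; rw [← heq]; exact h

lemma mul (hf : Wdd f z a b c d) (hg : Wdd g z a₂ b₂ c₂ d₂) :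
    Wdd (fun q => f q * g q) z (f z * a₂ + g z * a) (f z * b₂ + g z * b)
      (f z * c₂ + g z * c) (f z * d₂ + g z * d) := by
  have h := HasFDerivAt.mul hf hg
  have heq : f z • wmap a₂ b₂ c₂ d₂ + g z • wmap a b c d
      = wmap (f z * a₂ + g z * a) (f z * b₂ + g z * b) (f z * c₂ + g z * c)
        (f z * d₂ + g z * d) := by
    apply ContinuousLinearMap.ext; intro v
    simp [wmap_apply, smul_eq_mul]; ring
  unfold Wdd; rw [← heq]; exact h

lemma conj_ (hf : Wdd f z a b c d) :
    Wdd (fun q => conj (f q)) z (conj b) (conj a) (conj d) (conj c) := by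
  have h := ((Complex.conjCLE : ℂ ≃L[ℝ] ℂ).toContinuousLinearMap.hasFDerivAt).comp z hf
  have heq : ((Complex.conjCLE : ℂ ≃L[ℝ] ℂ).toContinuousLinearMap).comp (wmap a b c d)
      = wmap (conj b) (conj a) (conj d) (conj c) := by
    apply ContinuousLinearMap.ext; intro v
    simp [wmap_apply, Complex.conjCLE_apply, map_add, map_mul]
    ring
  unfold Wdd; rw [← heq]; exact h

lemma compHol {h : ℂ → ℂ} {h' : ℂ} (hh : HasDerivAt h h' (f z)) (hf : Wdd f z a b c d) :
    Wdd (fun q => h (f q)) z (h' * a) (h' * b) (h' * c) (h' * d) := by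
  have hc := (hh.hasFDerivAt.restrictScalars ℝ).comp z hf
  have heq : (ContinuousLinearMap.restrictScalars ℝ
        ((1 : ℂ →L[ℂ] ℂ).smulRight h')).comp (wmap a b c d)
      = wmap (h' * a) (h' * b) (h' * c) (h' * d) := by
    apply ContinuousLinearMap.ext; intro v
    simp [wmap_apply, smul_eq_mul]; ring
  unfold Wdd; rw [← heq]; exact hc

lemma hol {h : ℂ → ℂ} {h' : ℂ} (hh : HasDerivAt h h' z.2) :
    Wdd (fun q => h q.2) z 0 0 h' 0 :=
  (compHol (f := fun q => q.2) hh snd).of_eq (by ring) (by ring) (by ring) (by ring)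

lemma inv (hf : Wdd f z a b c d) (h0 : f z ≠ 0) :
    Wdd (fun q => (f q)⁻¹) z (-(f z ^ 2)⁻¹ * a) (-(f z ^ 2)⁻¹ * b)
      (-(f z ^ 2)⁻¹ * c) (-(f z ^ 2)⁻¹ * d) :=
  compHol (hasDerivAt_inv h0) hf

end Wdd

end SemiFlat

open SemiFlat in
/-- The standard semi-flat data
`W = ε/Im(τ̄₁τ₂)`, `b = -(W/ε)[Im(τ₂x̄)τ₁' + Im(τ̄₁x)τ₂']` built from holomorphic periods
`τ₁, τ₂` with `Im(τ̄₁τ₂) > 0` satisfies the Ricci-flatness (closedness) equations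
`(∂_y - b∂_x)b̄ = -W⁻³∂_x W` and `(∂_y - b∂_x)W = W∂_x b`.
A point of `ℂ × ℂ` is `z = (x, y)` with `x` the fibre coordinate and `y` the base
coordinate. -/
theorem statement15 (B : Set ℂ) (hB : IsOpen B) (ε : ℝ) (hε : 0 < ε)
    (τ₁ τ₂ : ℂ → ℂ)
    (hτ₁ : DifferentiableOn ℂ τ₁ B) (hτ₂ : DifferentiableOn ℂ τ₂ B)
    (him : ∀ y ∈ B, 0 < (conj (τ₁ y) * τ₂ y).im)
    (W : ℂ × ℂ → ℝ) (hWdef : ∀ z : ℂ × ℂ, W z = ε / (conj (τ₁ z.2) * τ₂ z.2).im)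
    (b : ℂ × ℂ → ℂ)
    (hbdef : ∀ z : ℂ × ℂ, b z = -((W z : ℂ) / ε) *
      (((τ₂ z.2 * conj z.1).im : ℂ) * deriv τ₁ z.2
        + ((conj (τ₁ z.2) * z.1).im : ℂ) * deriv τ₂ z.2)) :
    ∀ z : ℂ × ℂ, z.2 ∈ B →
      (wdy (fun q => conj (b q)) z - b z * wdx (fun q => conj (b q)) z
          = -((W z : ℂ) ^ 3)⁻¹ * wdx (fun q => (W q : ℂ)) z) ∧
      (wdy (fun q => (W q : ℂ)) z - b z * wdx (fun q => (W q : ℂ)) z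
          = (W z : ℂ) * wdx b z) := by
  have hεℂ : (ε : ℂ) ≠ 0 := Complex.ofReal_ne_zero.2 hε.ne'
  have h2I : (2 * Complex.I : ℂ) ≠ 0 := by simp [Complex.I_ne_zero]
  -- imaginary part as a complex expression
  have him' : ∀ u : ℂ, ((u.im : ℝ) : ℂ) = (u - conj u) / (2 * Complex.I) := by
    intro u
    rw [eq_div_iff h2I, Complex.sub_conj]
    push_cast
    ring
  -- global formula for W as a complex-valued function
  have hW1 : ∀ q : ℂ × ℂ, ((W q : ℝ) : ℂ)
      = 2 * Complex.I * (ε : ℂ) * (conj (τ₁ q.2) * τ₂ q.2 - τ₁ q.2 * conj (τ₂ q.2))⁻¹ := by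
    intro q
    rw [hWdef q, Complex.ofReal_div, him', map_mul, Complex.conj_conj,
      div_div_eq_mul_div, div_eq_mul_inv]
    ring
  -- global formula for b
  have hbf : b = fun q : ℂ × ℂ =>
      (q.1 * (conj (τ₂ q.2) * deriv τ₁ q.2 - conj (τ₁ q.2) * deriv τ₂ q.2)
        + conj q.1 * (τ₁ q.2 * deriv τ₂ q.2 - τ₂ q.2 * deriv τ₁ q.2))
      * (conj (τ₁ q.2) * τ₂ q.2 - τ₁ q.2 * conj (τ₂ q.2))⁻¹ := by
    have key : ∀ g S1 S2 d1 d2 : ℂ,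
        -(2 * Complex.I * (ε : ℂ) * g / (ε : ℂ)) * (S1 / (2 * Complex.I) * d1
          + S2 / (2 * Complex.I) * d2) = -(S1 * d1 + S2 * d2) * g := by
      intro g S1 S2 d1 d2
      field_simp
    funext q
    rw [hbdef q, hW1 q, him', him', key, map_mul, map_mul, Complex.conj_conj,
      Complex.conj_conj]
    ring
  intro z hz
  have ha1 : AnalyticOnNhd ℂ τ₁ B := hτ₁.analyticOnNhd hB
  have ha2 : AnalyticOnNhd ℂ τ₂ B := hτ₂.analyticOnNhd hB
  have hd1 : HasDerivAt τ₁ (deriv τ₁ z.2) z.2 := ((ha1 z.2 hz).differentiableAt).hasDerivAt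
  have hd2 : HasDerivAt τ₂ (deriv τ₂ z.2) z.2 := ((ha2 z.2 hz).differentiableAt).hasDerivAt
  have hd1' : HasDerivAt (deriv τ₁) (deriv (deriv τ₁) z.2) z.2 :=
    ((ha1.deriv z.2 hz).differentiableAt).hasDerivAt
  have hd2' : HasDerivAt (deriv τ₂) (deriv (deriv τ₂) z.2) z.2 :=
    ((ha2.deriv z.2 hz).differentiableAt).hasDerivAt
  have hG0 : (conj (τ₁ z.2) * τ₂ z.2 - τ₁ z.2 * conj (τ₂ z.2)) ≠ 0 := by
    have h := him z.2 hz
    intro hcon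
    have h2 : ((2 * ((conj (τ₁ z.2) * τ₂ z.2).im) : ℝ) : ℂ) * Complex.I = 0 := by
      rw [← Complex.sub_conj, map_mul, Complex.conj_conj]
      exact hcon
    simp only [mul_eq_zero, Complex.I_ne_zero, or_false, Complex.ofReal_eq_zero] at h2
    rcases h2 with h2 | h2
    · norm_num at h2
    · linarith
  have hT1 : Wdd (fun q : ℂ × ℂ => τ₁ q.2) z 0 0 (deriv τ₁ z.2) 0 := Wdd.hol hd1
  have hT2 : Wdd (fun q : ℂ × ℂ => τ₂ q.2) z 0 0 (deriv τ₂ z.2) 0 := Wdd.hol hd2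
  have hD1 : Wdd (fun q : ℂ × ℂ => deriv τ₁ q.2) z 0 0 (deriv (deriv τ₁) z.2) 0 := Wdd.hol hd1'
  have hD2 : Wdd (fun q : ℂ × ℂ => deriv τ₂ q.2) z 0 0 (deriv (deriv τ₂) z.2) 0 := Wdd.hol hd2'
  have hT1c : Wdd (fun q : ℂ × ℂ => conj (τ₁ q.2)) z 0 0 0 (conj (deriv τ₁ z.2)) :=
    (hT1.conj_).of_eq (by simp) (by simp) (by simp) rfl
  have hT2c : Wdd (fun q : ℂ × ℂ => conj (τ₂ q.2)) z 0 0 0 (conj (deriv τ₂ z.2)) :=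
    (hT2.conj_).of_eq (by simp) (by simp) (by simp) rfl
  have hX : Wdd (fun q : ℂ × ℂ => q.1) z 1 0 0 0 := Wdd.fst
  have hXc : Wdd (fun q : ℂ × ℂ => conj q.1) z 0 1 0 0 :=
    (hX.conj_).of_eq (by simp) (by simp) (by simp) (by simp)
  have hGf : Wdd (fun q : ℂ × ℂ => conj (τ₁ q.2) * τ₂ q.2 - τ₁ q.2 * conj (τ₂ q.2)) z
      0 0 (conj (τ₁ z.2) * (deriv τ₂ z.2) - conj (τ₂ z.2) * (deriv τ₁ z.2)) ((τ₂ z.2) * conj (deriv τ₁ z.2) - (τ₁ z.2) * conj (deriv τ₂ z.2)) :=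
    ((hT1c.mul hT2).sub (hT1.mul hT2c)).of_eq (by ring) (by ring) (by ring) (by ring)
  have hGinv : Wdd (fun q : ℂ × ℂ => (conj (τ₁ q.2) * τ₂ q.2 - τ₁ q.2 * conj (τ₂ q.2))⁻¹) z
      0 0 ((-((conj (τ₁ z.2) * τ₂ z.2 - τ₁ z.2 * conj (τ₂ z.2)) ^ 2)⁻¹) * (conj (τ₁ z.2) * (deriv τ₂ z.2) - conj (τ₂ z.2) * (deriv τ₁ z.2))) ((-((conj (τ₁ z.2) * τ₂ z.2 - τ₁ z.2 * conj (τ₂ z.2)) ^ 2)⁻¹) * ((τ₂ z.2) * conj (deriv τ₁ z.2) - (τ₁ z.2) * conj (deriv τ₂ z.2))) :=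
    (hGf.inv hG0).of_eq (by ring) (by ring) rfl rfl
  have hWf : Wdd (fun q : ℂ × ℂ =>
      2 * Complex.I * (ε : ℂ) * (conj (τ₁ q.2) * τ₂ q.2 - τ₁ q.2 * conj (τ₂ q.2))⁻¹) z
      0 0 (2 * Complex.I * (ε : ℂ) * ((-((conj (τ₁ z.2) * τ₂ z.2 - τ₁ z.2 * conj (τ₂ z.2)) ^ 2)⁻¹) * (conj (τ₁ z.2) * (deriv τ₂ z.2) - conj (τ₂ z.2) * (deriv τ₁ z.2))))
      (2 * Complex.I * (ε : ℂ) * ((-((conj (τ₁ z.2) * τ₂ z.2 - τ₁ z.2 * conj (τ₂ z.2)) ^ 2)⁻¹) * ((τ₂ z.2) * conj (deriv τ₁ z.2) - (τ₁ z.2) * conj (deriv τ₂ z.2)))) :=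
    ((Wdd.const (2 * Complex.I * (ε : ℂ))).mul hGinv).of_eq
      (by ring) (by ring) (by ring) (by ring)
  have hA : Wdd (fun q : ℂ × ℂ =>
      conj (τ₂ q.2) * deriv τ₁ q.2 - conj (τ₁ q.2) * deriv τ₂ q.2) z
      0 0 (conj (τ₂ z.2) * (deriv (deriv τ₁) z.2) - conj (τ₁ z.2) * (deriv (deriv τ₂) z.2)) ((deriv τ₁ z.2) * conj (deriv τ₂ z.2) - (deriv τ₂ z.2) * conj (deriv τ₁ z.2)) :=
    ((hT2c.mul hD1).sub (hT1c.mul hD2)).of_eq (by ring) (by ring) (by ring) (by ring)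
  have hC : Wdd (fun q : ℂ × ℂ => τ₁ q.2 * deriv τ₂ q.2 - τ₂ q.2 * deriv τ₁ q.2) z
      0 0 ((τ₁ z.2) * (deriv (deriv τ₂) z.2) - (τ₂ z.2) * (deriv (deriv τ₁) z.2)) 0 :=
    ((hT1.mul hD2).sub (hT2.mul hD1)).of_eq (by ring) (by ring) (by ring) (by ring)
  have hN : Wdd (fun q : ℂ × ℂ =>
      q.1 * (conj (τ₂ q.2) * deriv τ₁ q.2 - conj (τ₁ q.2) * deriv τ₂ q.2)
        + conj q.1 * (τ₁ q.2 * deriv τ₂ q.2 - τ₂ q.2 * deriv τ₁ q.2)) z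
      (conj (τ₂ z.2) * (deriv τ₁ z.2) - conj (τ₁ z.2) * (deriv τ₂ z.2)) ((τ₁ z.2) * (deriv τ₂ z.2) - (τ₂ z.2) * (deriv τ₁ z.2)) (z.1 * (conj (τ₂ z.2) * (deriv (deriv τ₁) z.2) - conj (τ₁ z.2) * (deriv (deriv τ₂) z.2)) + conj z.1 * ((τ₁ z.2) * (deriv (deriv τ₂) z.2) - (τ₂ z.2) * (deriv (deriv τ₁) z.2))) (z.1 * ((deriv τ₁ z.2) * conj (deriv τ₂ z.2) - (deriv τ₂ z.2) * conj (deriv τ₁ z.2))) :=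
    ((hX.mul hA).add (hXc.mul hC)).of_eq (by ring) (by ring) (by ring) (by ring)
  have hBf : Wdd (fun q : ℂ × ℂ =>
      (q.1 * (conj (τ₂ q.2) * deriv τ₁ q.2 - conj (τ₁ q.2) * deriv τ₂ q.2)
        + conj q.1 * (τ₁ q.2 * deriv τ₂ q.2 - τ₂ q.2 * deriv τ₁ q.2))
      * (conj (τ₁ q.2) * τ₂ q.2 - τ₁ q.2 * conj (τ₂ q.2))⁻¹) z
      ((conj (τ₂ z.2) * (deriv τ₁ z.2) - conj (τ₁ z.2) * (deriv τ₂ z.2)) * (conj (τ₁ z.2) * τ₂ z.2 - τ₁ z.2 * conj (τ₂ z.2))⁻¹) (((τ₁ z.2) * (deriv τ₂ z.2) - (τ₂ z.2) * (deriv τ₁ z.2)) * (conj (τ₁ z.2) * τ₂ z.2 - τ₁ z.2 * conj (τ₂ z.2))⁻¹) ((z.1 * (conj (τ₂ z.2) * (deriv τ₁ z.2) - conj (τ₁ z.2) * (deriv τ₂ z.2)) + conj z.1 * ((τ₁ z.2) * (deriv τ₂ z.2) - (τ₂ z.2) * (deriv τ₁ z.2))) * ((-((conj (τ₁ z.2)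 * τ₂ z.2 - τ₁ z.2 * conj (τ₂ z.2)) ^ 2)⁻¹) * (conj (τ₁ z.2) * (deriv τ₂ z.2) - conj (τ₂ z.2) * (deriv τ₁ z.2))) + (conj (τ₁ z.2) * τ₂ z.2 - τ₁ z.2 * conj (τ₂ z.2))⁻¹ * (z.1 * (conj (τ₂ z.2) * (deriv (deriv τ₁) z.2) - conj (τ₁ z.2) * (deriv (deriv τ₂) z.2)) + conj z.1 * ((τ₁ z.2) * (deriv (deriv τ₂) z.2) - (τ₂ z.2) * (deriv (deriv τ₁) z.2)))) ((z.1 * (conj (τ₂ z.2) * (deriv τ₁ z.2) - conj (τ₁ z.2) * (deriv τ₂ z.2)) + conj z.1 * ((τ₁ z.2) * (deriv τ₂ z.2) - (τ₂ z.2) * (deriv τ₁ z.2))) * ((-((conj (τ₁ z.2) * τ₂ z.2 - τ₁ z.2 * conj (τ₂ z.2)) ^ 2)⁻¹) * ((τ₂ z.2) * conj (deriv τ₁ z.2) - (τ₁ z.2) * conj (deriv τ₂ z.2))) + (conj (τ₁ z.2) * τ₂ z.2 - τ₁ z.2 * conj (τ₂ z.2))⁻¹ * (z.1 * ((deriv τ₁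 z.2) * conj (deriv τ₂ z.2) - (deriv τ₂ z.2) * conj (deriv τ₁ z.2)))) :=
    (hN.mul hGinv).of_eq (by ring) (by ring) (by ring) (by ring)
  have hBcf : Wdd (fun q : ℂ × ℂ => conj
      ((q.1 * (conj (τ₂ q.2) * deriv τ₁ q.2 - conj (τ₁ q.2) * deriv τ₂ q.2)
        + conj q.1 * (τ₁ q.2 * deriv τ₂ q.2 - τ₂ q.2 * deriv τ₁ q.2))
      * (conj (τ₁ q.2) * τ₂ q.2 - τ₁ q.2 * conj (τ₂ q.2))⁻¹)) z
      (conj (((τ₁ z.2) * (deriv τ₂ z.2) - (τ₂ z.2) * (deriv τ₁ z.2)) * (conj (τ₁ z.2) * τ₂ z.2 - τ₁ z.2 * conj (τ₂ z.2))⁻¹)) (conj ((conj (τ₂ z.2) * (deriv τ₁ z.2) - conj (τ₁ z.2) * (deriv τ₂ z.2)) * (conj (τ₁ z.2) * τ₂ z.2 - τ₁ z.2 * conj (τ₂ z.2))⁻¹)) (conj ((z.1 * (conj (τ₂ z.2) * (deriv τ₁ z.2) - conj (τ₁ z.2) * (deriv τ₂ z.2)) + conj z.1 * ((τ₁ z.2)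 * (deriv τ₂ z.2) - (τ₂ z.2) * (deriv τ₁ z.2))) * ((-((conj (τ₁ z.2) * τ₂ z.2 - τ₁ z.2 * conj (τ₂ z.2)) ^ 2)⁻¹) * ((τ₂ z.2) * conj (deriv τ₁ z.2) - (τ₁ z.2) * conj (deriv τ₂ z.2))) + (conj (τ₁ z.2) * τ₂ z.2 - τ₁ z.2 * conj (τ₂ z.2))⁻¹ * (z.1 * ((deriv τ₁ z.2) * conj (deriv τ₂ z.2) - (deriv τ₂ z.2) * conj (deriv τ₁ z.2))))) (conj ((z.1 * (conj (τ₂ z.2) * (deriv τ₁ z.2) - conj (τ₁ z.2) * (deriv τ₂ z.2)) + conj z.1 * ((τ₁ z.2) * (deriv τ₂ z.2) - (τ₂ z.2) * (deriv τ₁ z.2))) * ((-((conj (τ₁ z.2) * τ₂ z.2 - τ₁ z.2 * conj (τ₂ z.2)) ^ 2)⁻¹) * (conj (τ₁ z.2) * (deriv τ₂ z.2) - conj (τ₂ z.2) * (deriv τ₁ z.2))) + (conj (τ₁ z.2) * τ₂ z.2 - τ₁ z.2 * conj (τ₂ z.2))⁻¹ * (z.1 * (conj (τ₂ z.2) * (deriv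 (deriv τ₁) z.2) - conj (τ₁ z.2) * (deriv (deriv τ₂) z.2)) + conj z.1 * ((τ₁ z.2) * (deriv (deriv τ₂) z.2) - (τ₂ z.2) * (deriv (deriv τ₁) z.2))))) :=
    hBf.conj_
  simp only [hbf, hW1]
  rw [hBcf.wdy_eq, hBcf.wdx_eq, hBf.wdx_eq, hWf.wdx_eq, hWf.wdy_eq]
  simp only [map_add, map_sub, map_mul, map_neg, map_inv₀, map_pow, Complex.conj_conj,
    Complex.conj_I, Complex.conj_ofReal, map_ofNat]
  have hGneg : τ₁ z.2 * conj (τ₂ z.2) - conj (τ₁ z.2) * τ₂ z.2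
      = -(conj (τ₁ z.2) * τ₂ z.2 - τ₁ z.2 * conj (τ₂ z.2)) := by ring
  simp only [hGneg, inv_neg, neg_sq, neg_neg, neg_mul, mul_neg]
  constructor
  · field_simp
    ring
  · field_simp
    ring
end

section
/- For s ≥ 1 the heat-kernel deviation K(x,y,s) = H(x,y,s) − 1 on a compact Riemannian manifold of volume 1 satisfies K(x,y,s) ≥ −K(x,x,1)^{1/2} K(y,y,1)^{1/2} e^{−λ(s−1)}, where λ > 0 is the first positive eigenvalue of the Laplacian; consequently, if K(x,x,1) ≤ A₃ δ^{−10} for all x and λ ≥ A₂ δ for positive constants A₂, A₃ and parameter δ > 0, then the Green's function G(x,y) = ∫₀^∞ K(x,y,s) ds (normalized with ∫ G(x,·) = 0) satisfies ∫₁^∞ K(x,y,s) ds ≥ −A δ^{−11} for a constant A depending only on A₂, A₃. -/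
/-!
Since `e^{-λⱼ s} = e^{-λⱼ (s-1)} e^{-λⱼ}` and `λⱼ ≥ λ₁`, the `j`-th term of `K(x,y,s)` is bounded
in absolute value by `e^{-λ₁(s-1)} · √(e^{-λⱼ} φⱼ(x)²) · √(e^{-λⱼ} φⱼ(y)²)`; Cauchy–Schwarz over `j`
bounds the sum of the square-root products by `K(x,x,1)^{1/2} K(y,y,1)^{1/2}`. With
`K(·,·,1) ≤ A₃ δ⁻¹⁰` the integrand is then at least `-A₃ δ⁻¹⁰ e^{-λ₁(s-1)}`, whose integral over
`[1, ∞)` is `-A₃ δ⁻¹⁰ / λ₁ ≥ -(A₃ / A₂) δ⁻¹¹`.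
-/

open Real MeasureTheory

lemma summable_sqrt_mul_sqrt {ι : Type*} {u v : ι → ℝ} (hu : ∀ j, 0 ≤ u j) (hv : ∀ j, 0 ≤ v j)
    (hsu : Summable u) (hsv : Summable v) : Summable fun j => √(u j) * √(v j) := by
  refine ((hsu.add hsv).div_const 2).of_nonneg_of_le (fun j => by positivity) fun j => ?_
  nlinarith [sq_nonneg (√(u j) - √(v j)), sq_sqrt (hu j), sq_sqrt (hv j)]

lemma tsum_sqrt_mul_sqrt_le {ι : Type*} {u v : ι → ℝ} (hu : ∀ j, 0 ≤ u j) (hv : ∀ j, 0 ≤ v j)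
    (hsu : Summable u) (hsv : Summable v) :
    ∑' j, √(u j) * √(v j) ≤ √(∑' j, u j) * √(∑' j, v j) :=
  (summable_sqrt_mul_sqrt hu hv hsu hsv).tsum_le_of_sum_le fun s =>
    (sum_sqrt_mul_sqrt_le s hu hv).trans <| mul_le_mul
      (sqrt_le_sqrt (hsu.sum_le_tsum s fun j _ => hu j))
      (sqrt_le_sqrt (hsv.sum_le_tsum s fun j _ => hv j)) (sqrt_nonneg _) (sqrt_nonneg _)

lemma integral_Ici_exp_neg_mul_sub {μ : ℝ} (hμ : 0 < μ) (c : ℝ) :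
    IntegrableOn (fun s => exp (-μ * (s - c))) (Set.Ici c) ∧
      ∫ s in Set.Ici c, exp (-μ * (s - c)) = μ⁻¹ := by
  have hsplit : (fun s => exp (-μ * (s - c))) = fun s => exp (μ * c) * exp (-μ * s) := by
    ext s; rw [← exp_add]; ring_nf
  rw [hsplit, integrableOn_Ici_iff_integrableOn_Ioi, integral_Ici_eq_integral_Ioi,
    integral_const_mul, integral_exp_mul_Ioi (neg_neg_of_pos hμ)]
  refine ⟨(integrableOn_exp_mul_Ioi (neg_neg_of_pos hμ) c).const_mul _, ?_⟩
  rw [neg_mul, neg_div_neg_eq, mul_div, ← exp_add]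
  simp

lemma neg_div_le_setIntegral_Ici {f : ℝ → ℝ} {D μ c : ℝ} (hD : 0 ≤ D) (hμ : 0 < μ)
    (hf : ∀ s ∈ Set.Ici c, -(D * exp (-μ * (s - c))) ≤ f s) :
    -(D / μ) ≤ ∫ s in Set.Ici c, f s := by
  by_cases hfi : IntegrableOn f (Set.Ici c)
  · obtain ⟨hexp, hexp_int⟩ := integral_Ici_exp_neg_mul_sub hμ c
    calc -(D / μ) = ∫ s in Set.Ici c, -(D * exp (-μ * (s - c))) := by
          rw [integral_neg, integral_const_mul, hexp_int, div_eq_mul_inv]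
      _ ≤ ∫ s in Set.Ici c, f s :=
          setIntegral_mono_on (hexp.const_mul D).neg hfi measurableSet_Ici hf
  · rw [integral_undef hfi, neg_nonpos]
    positivity

noncomputable section HeatSeries

variable {ι X : Type*} (lam : ι → ℝ) (φ : ι → X → ℝ)

def heatTerm (s : ℝ) (x y : X) (j : ι) : ℝ := exp (-lam j * s) * φ j x * φ j y

/-- The heat-kernel deviation `K(x,y,s) = H(x,y,s) - 1`, indexed by the eigenpairs
`(lam j, φ j)` of the nonzero eigenvalues. -/
def heatSeries (s : ℝ) (x y : X) : ℝ := ∑' j, heatTerm lam φ s x y j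

lemma heatTerm_self_nonneg (s : ℝ) (x : X) (j : ι) : 0 ≤ heatTerm lam φ s x x j := by
  rw [heatTerm, mul_assoc]
  exact mul_nonneg (exp_pos _).le (mul_self_nonneg _)

lemma sqrt_heatTerm_mul_sqrt_heatTerm (s : ℝ) (x y : X) (j : ι) :
    √(heatTerm lam φ s x x j) * √(heatTerm lam φ s y y j) = |heatTerm lam φ s x y j| := by
  rw [← sqrt_mul (heatTerm_self_nonneg lam φ s x j), ← sqrt_mul_self_eq_abs]
  congr 1
  simp only [heatTerm]
  ring

variable {lam}

lemma abs_heatTerm_le {μ s : ℝ} (hμ : ∀ j, μ ≤ lam j) (hs : 1 ≤ s) (x y : X) (j : ι) :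
    |heatTerm lam φ s x y j| ≤ exp (-μ * (s - 1)) * |heatTerm lam φ 1 x y j| := by
  have hdecay : exp (-lam j * s) = exp (-lam j * (s - 1)) * exp (-lam j * 1) := by
    rw [← exp_add]; ring_nf
  simp only [heatTerm, abs_mul, abs_exp, hdecay, mul_assoc]
  gcongr
  nlinarith [hμ j]

theorem abs_heatSeries_le {μ s : ℝ} (hμ : ∀ j, μ ≤ lam j) (hs : 1 ≤ s) {x y : X}
    (hx : Summable (heatTerm lam φ 1 x x)) (hy : Summable (heatTerm lam φ 1 y y)) :
    |heatSeries lam φ s x y|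
      ≤ √(heatSeries lam φ 1 x x) * √(heatSeries lam φ 1 y y) * exp (-μ * (s - 1)) := by
  have hsum := summable_sqrt_mul_sqrt (heatTerm_self_nonneg lam φ 1 x)
    (heatTerm_self_nonneg lam φ 1 y) hx hy
  calc |heatSeries lam φ s x y|
      ≤ exp (-μ * (s - 1)) * ∑' j, √(heatTerm lam φ 1 x x j) * √(heatTerm lam φ 1 y y j) :=
        tsum_of_norm_bounded (hsum.hasSum.mul_left _) fun j => by
          rw [norm_eq_abs, sqrt_heatTerm_mul_sqrt_heatTerm]
          exact abs_heatTerm_le φ hμ hs x y j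
    _ ≤ exp (-μ * (s - 1)) * (√(heatSeries lam φ 1 x x) * √(heatSeries lam φ 1 y y)) := by
        gcongr
        exact tsum_sqrt_mul_sqrt_le (heatTerm_self_nonneg lam φ 1 x)
          (heatTerm_self_nonneg lam φ 1 y) hx hy
    _ = _ := mul_comm _ _

end HeatSeries

/-- Spectral heat-kernel estimate.  On a compact Riemannian manifold of
volume 1 with spectral data `0 < λ₁ ≤ λⱼ` and orthonormal eigenfunctions `φⱼ`, the
heat-kernel deviation `K(x,y,s) = Σ_{j≥1} e^{-λⱼ s} φⱼ(x) φⱼ(y)` satisfies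
`K(x,y,s) ≥ -K(x,x,1)^{1/2} K(y,y,1)^{1/2} e^{-λ₁(s-1)}` for `s ≥ 1`; consequently, if
`K(x,x,1) ≤ A₃ δ⁻¹⁰` and `λ₁ ≥ A₂ δ`, then `∫₁^∞ K(x,y,s) ds ≥ -A δ⁻¹¹` for a constant
`A` depending only on `A₂, A₃`. -/
theorem statement18 (A₂ A₃ : ℝ) (hA₂ : 0 < A₂) (hA₃ : 0 < A₃) :
    ∃ A : ℝ, 0 < A ∧
      ∀ (X : Type) (lam : ℕ → ℝ) (φ : ℕ → X → ℝ) (δ : ℝ), 0 < δ →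
        0 < lam 0 → (∀ j, lam 0 ≤ lam j) →
        (∀ (x y : X) (s : ℝ), 1 ≤ s →
          Summable (fun j => Real.exp (-lam j * s) * φ j x * φ j y)) →
        (∀ (x y : X) (s : ℝ), 1 ≤ s →
          (∑' j, Real.exp (-lam j * s) * φ j x * φ j y)
            ≥ -(Real.sqrt (∑' j, Real.exp (-lam j * 1) * φ j x * φ j x)
                * Real.sqrt (∑' j, Real.exp (-lam j * 1) * φ j y * φ j y)
                * Real.exp (-lam 0 * (s - 1)))) ∧
        ((∀ x : X, (∑' j, Real.exp (-lam j * 1) * φ j x * φ j x) ≤ A₃ / δ ^ 10) →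
          lam 0 ≥ A₂ * δ →
          ∀ x y : X,
            (∫ s in Set.Ici (1:ℝ), ∑' j, Real.exp (-lam j * s) * φ j x * φ j y)
              ≥ -(A / δ ^ 11)) := by
  refine ⟨A₃ / A₂, by positivity, fun X lam φ δ hδ hlam₀ hlam hsum => ?_⟩
  have hlower : ∀ (x y : X) (s : ℝ), 1 ≤ s →
      -(√(heatSeries lam φ 1 x x) * √(heatSeries lam φ 1 y y) * exp (-lam 0 * (s - 1)))
        ≤ heatSeries lam φ s x y := fun x y s hs =>
    neg_le_of_abs_le (abs_heatSeries_le φ hlam hs (hsum x x 1 le_rfl) (hsum y y 1 le_rfl))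
  refine ⟨hlower, fun hdiag hgap x y => ?_⟩
  have hD : √(heatSeries lam φ 1 x x) * √(heatSeries lam φ 1 y y) ≤ A₃ / δ ^ 10 := by
    calc _ ≤ √(A₃ / δ ^ 10) * √(A₃ / δ ^ 10) :=
          mul_le_mul (sqrt_le_sqrt (hdiag x)) (sqrt_le_sqrt (hdiag y)) (sqrt_nonneg _)
            (sqrt_nonneg _)
      _ = A₃ / δ ^ 10 := mul_self_sqrt (by positivity)
  calc -(A₃ / A₂ / δ ^ 11) = -(A₃ / δ ^ 10 / (A₂ * δ)) := by field_simp
    _ ≤ -(A₃ / δ ^ 10 / lam 0) := by gcongr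
    _ ≤ ∫ s in Set.Ici 1, heatSeries lam φ s x y :=
        neg_div_le_setIntegral_Ici (by positivity) hlam₀ fun s hs =>
          (neg_le_neg (mul_le_mul_of_nonneg_right hD (exp_pos _).le)).trans (hlower x y s hs)
end
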